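/- arXiv:2505.23112 — 11 statements merged into one kernel-verified Lean document; each statement's English description precedes it below -/
import Mathlib

section
/- Let d1 > 0, d2 > 0, y⋆ > 0 with d1·d2 < 1/(4·y⋆²). Then the pair (x̄1, ū) ∈ ℝ² satisfies the equilibrium equations -d1·x̄1 + 1 - y⋆·ū = 0 and -d2·y⋆ + x̄1·ū = 0 if and only if x̄1 = (1/(2·d1))·(1 + √(1 - 4·d1·d2·y⋆²)) or x̄1 = (1/(2·d1))·(1 - √(1 - 4·d1·d2·y⋆²)), with in each case ū = -((d1 - d2)·x̄1 - 1)·y⋆/(x̄1² + y⋆²). In particular there are exactly two assignable equilibria with x̄2 = y⋆. -/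
/-- the two assignable equilibria of the scaled Boost converter when d1 > 0. -/
theorem boost_equilibria_d1_pos
    (d1 d2 ystar : ℝ) (hd1 : 0 < d1) (hd2 : 0 < d2) (hy : 0 < ystar)
    (hcond : d1 * d2 < 1 / (4 * ystar ^ 2)) :
    ∀ x1bar ubar : ℝ,
      (-d1 * x1bar + 1 - ystar * ubar = 0 ∧ -d2 * ystar + x1bar * ubar = 0) ↔
        ((x1bar = (1 / (2 * d1)) * (1 + Real.sqrt (1 - 4 * d1 * d2 * ystar ^ 2)) ∨
          x1bar = (1 / (2 * d1)) * (1 - Real.sqrt (1 - 4 * d1 * d2 * ystar ^ 2))) ∧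
          ubar = -((d1 - d2) * x1bar - 1) * ystar / (x1bar ^ 2 + ystar ^ 2)) := by
  intro x1 u
  have hy2 : (0:ℝ) < ystar ^ 2 := by positivity
  have key : d1 * d2 * (4 * ystar ^ 2) < 1 := by
    have h := mul_lt_mul_of_pos_right hcond (by positivity : (0:ℝ) < 4 * ystar ^ 2)
    rwa [div_mul_cancel₀ 1 (by positivity : (4 * ystar ^ 2 : ℝ) ≠ 0)] at h
  have hD : (0:ℝ) ≤ 1 - 4 * d1 * d2 * ystar ^ 2 := by nlinarith [key]
  set s := Real.sqrt (1 - 4 * d1 * d2 * ystar ^ 2) with hs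
  have hs2 : s ^ 2 = 1 - 4 * d1 * d2 * ystar ^ 2 := Real.sq_sqrt hD
  have hden : x1 ^ 2 + ystar ^ 2 ≠ 0 := by positivity
  have hd1' : d1 ≠ 0 := hd1.ne'
  constructor
  · rintro ⟨h1, h2⟩
    have hq : d1 * x1 ^ 2 - x1 + d2 * ystar ^ 2 = 0 := by
      linear_combination (-x1) * h1 - ystar * h2
    have hfac : (2 * d1 * x1 - (1 + s)) * (2 * d1 * x1 - (1 - s)) = 0 := by
      linear_combination 4 * d1 * hq - hs2
    refine ⟨?_, ?_⟩
    · rcases mul_eq_zero.mp hfac with h | h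
      · left; field_simp; linarith
      · right; field_simp; linarith
    · rw [eq_div_iff hden]
      linear_combination x1 * h2 - ystar * h1
  · rintro ⟨hx, hu⟩
    have hfac : (2 * d1 * x1 - (1 + s)) * (2 * d1 * x1 - (1 - s)) = 0 := by
      rcases hx with hx | hx
      · have h2s : 2 * d1 * x1 = 1 + s := by rw [hx]; field_simp
        rw [h2s]; ring
      · have h2s : 2 * d1 * x1 = 1 - s := by rw [hx]; field_simp
        rw [h2s]; ring
    have h4 : 4 * d1 * (d1 * x1 ^ 2 - x1 + d2 * ystar ^ 2) = 0 := by
      linear_combination hfac + hs2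
    have hq : d1 * x1 ^ 2 - x1 + d2 * ystar ^ 2 = 0 :=
      (mul_eq_zero.mp h4).resolve_left (by positivity)
    have hu' : u * (x1 ^ 2 + ystar ^ 2) = -((d1 - d2) * x1 - 1) * ystar := by
      rw [hu]; field_simp
    constructor
    · have h0 : (-d1 * x1 + 1 - ystar * u) * (x1 ^ 2 + ystar ^ 2) = 0 := by
        linear_combination (-ystar) * hu' - x1 * hq
      exact (mul_eq_zero.mp h0).resolve_right hden
    · have h0 : (-d2 * ystar + x1 * u) * (x1 ^ 2 + ystar ^ 2) = 0 := by
        linear_combination x1 * hu' - ystar * hq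
      exact (mul_eq_zero.mp h0).resolve_right hden
end

section
/- Let d1 > 0, d2 > 0, y⋆ > 0. There exists a pair (x̄1, ū) ∈ ℝ² satisfying -d1·x̄1 + 1 - y⋆·ū = 0 and -d2·y⋆ + x̄1·ū = 0 if and only if d1·d2 ≤ 1/(4·y⋆²); moreover there exist two such pairs with distinct values of x̄1 if and only if d1·d2 < 1/(4·y⋆²), and when d1·d2 = 1/(4·y⋆²) the unique solution has x̄1 = 1/(2·d1). -/
/-- existence condition for assignable equilibria of the Boost converter with d1 > 0. -/
theorem boost_equilibrium_existence
    (d1 d2 ystar : ℝ) (hd1 : 0 < d1) (hd2 : 0 < d2) (hy : 0 < ystar) :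
    ((∃ x1bar ubar : ℝ,
        -d1 * x1bar + 1 - ystar * ubar = 0 ∧ -d2 * ystar + x1bar * ubar = 0) ↔
      d1 * d2 ≤ 1 / (4 * ystar ^ 2)) ∧
    ((∃ x1bar ubar x1bar' ubar' : ℝ, x1bar ≠ x1bar' ∧
        (-d1 * x1bar + 1 - ystar * ubar = 0 ∧ -d2 * ystar + x1bar * ubar = 0) ∧
        (-d1 * x1bar' + 1 - ystar * ubar' = 0 ∧ -d2 * ystar + x1bar' * ubar' = 0)) ↔
      d1 * d2 < 1 / (4 * ystar ^ 2)) ∧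
    (d1 * d2 = 1 / (4 * ystar ^ 2) →
      ∀ x1bar ubar : ℝ,
        (-d1 * x1bar + 1 - ystar * ubar = 0 ∧ -d2 * ystar + x1bar * ubar = 0) →
        x1bar = 1 / (2 * d1)) := by
  have hy2 : (0:ℝ) < ystar ^ 2 := by positivity
  set D : ℝ := 1 - 4 * d1 * d2 * ystar ^ 2 with hD
  -- quadratic reduction
  have quad : ∀ x u : ℝ,
      (-d1 * x + 1 - ystar * u = 0 ∧ -d2 * ystar + x * u = 0) →
      (2 * d1 * x - 1) ^ 2 = D := by
    rintro x u ⟨h1, h2⟩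
    have hq : d1 * x ^ 2 - x + d2 * ystar ^ 2 = 0 := by
      have hu : u = (1 - d1 * x) / ystar := by
        field_simp
        linarith
      rw [hu] at h2
      field_simp at h2
      nlinarith [h2]
    nlinarith [hq]
  have sol : ∀ s : ℝ, s ^ 2 = D →
      (-d1 * ((1 + s) / (2 * d1)) + 1 - ystar * ((1 - s) / (2 * ystar)) = 0 ∧
       -d2 * ystar + ((1 + s) / (2 * d1)) * ((1 - s) / (2 * ystar)) = 0) := by
    intro s hs
    constructor
    · field_simp
      ring
    · field_simp
      nlinarith [hs]
  have hcond : ∀ r : Prop, True := fun _ => trivial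
  refine ⟨?_, ?_, ?_⟩
  · constructor
    · rintro ⟨x, u, h⟩
      have := quad x u h
      have hDnn : 0 ≤ D := this ▸ sq_nonneg _
      rw [le_div_iff₀ (by positivity)]
      simp only [hD] at hDnn
      nlinarith [hDnn]
    · intro hle
      have hDnn : 0 ≤ D := by
        rw [le_div_iff₀ (by positivity)] at hle
        simp only [hD]; nlinarith
      refine ⟨(1 + Real.sqrt D) / (2 * d1), (1 - Real.sqrt D) / (2 * ystar),
        sol _ (Real.sq_sqrt hDnn)⟩
  · constructor
    · rintro ⟨x, u, x', u', hne, h, h'⟩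
      have e1 := quad x u h
      have e2 := quad x' u' h'
      have hDnn : 0 ≤ D := e1 ▸ sq_nonneg _
      rcases hDnn.lt_or_eq with hpos | heq
      · rw [lt_div_iff₀ (by positivity)]
        simp only [hD] at hpos; nlinarith
      · exfalso
        apply hne
        have hx : 2 * d1 * x - 1 = 0 := by
          nlinarith [e1, heq]
        have hx' : 2 * d1 * x' - 1 = 0 := by
          nlinarith [e2, heq]
        have h2 : (2 * d1) * x = (2 * d1) * x' := by linarith
        exact mul_left_cancel₀ (by positivity) h2
    · intro hlt
      have hDpos : 0 < D := by
        rw [lt_div_iff₀ (by positivity)] at hlt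
        simp only [hD]; nlinarith
      have hs := Real.sqrt_pos.mpr hDpos
      refine ⟨(1 + Real.sqrt D) / (2 * d1), (1 - Real.sqrt D) / (2 * ystar),
        (1 + (-Real.sqrt D)) / (2 * d1), (1 - (-Real.sqrt D)) / (2 * ystar),
        ?_, sol _ (Real.sq_sqrt hDpos.le), sol _ (by rw [neg_pow]; simp [Real.sq_sqrt hDpos.le])⟩
      intro hcontra
      rw [div_eq_div_iff (by positivity) (by positivity)] at hcontra
      have : Real.sqrt D = -Real.sqrt D := by
        have h2d : (2 * d1) ≠ 0 := by positivity
        field_simp at hcontra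
        nlinarith [hcontra]
      linarith
  · intro heq x u h
    have e1 := quad x u h
    have hD0 : D = 0 := by
      simp only [hD]
      rw [eq_div_iff (by positivity)] at heq
      nlinarith
    rw [hD0] at e1
    have : 2 * d1 * x - 1 = 0 := by nlinarith [sq_nonneg (2 * d1 * x - 1)]
    field_simp
    linarith
end

section
/- Let d1 ≥ 0, d2 > 0, y⋆ > 0 and let x1, x2, u : ℝ → ℝ be differentiable functions satisfying the scaled Boost converter model, with u(τ) ≠ 0 for all τ and x2(τ) = y⋆ for all τ. Then u satisfies the zero-dynamics differential equation u'(τ) = (u(τ)/d2)·(u(τ)² - u(τ)/y⋆ + d1·d2) for all τ. -/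
/-!
Holding `x2 ≡ y⋆` turns the second equation into the algebraic relation `x1 · u = d2 y⋆`, so
`x1 = d2 y⋆ / u`. Substituting this and its derivative `-d2 y⋆ u' / u²` into the first equation
leaves an equation that is linear in `u'`; solving it gives the zero dynamics.
-/

namespace BoostConverter

theorem x1_eq_of_x2_eq_const {d2 ystar : ℝ} {x1 x2 u : ℝ → ℝ}
    (heq2 : ∀ τ, deriv x2 τ = -d2 * x2 τ + x1 τ * u τ)
    (hune : ∀ τ, u τ ≠ 0) (hx2c : ∀ τ, x2 τ = ystar) :
    x1 = fun τ => d2 * ystar / u τ := by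
  have hx2' : ∀ τ, deriv x2 τ = 0 := by
    simp only [show x2 = fun _ => ystar from funext hx2c, deriv_const', implies_true]
  funext τ
  rw [eq_div_iff (hune τ)]
  linear_combination hx2' τ - heq2 τ + d2 * hx2c τ

theorem zero_dynamics_of_first_eq {d1 d2 ystar u u' : ℝ}
    (hd2 : d2 ≠ 0) (hy : ystar ≠ 0) (hu : u ≠ 0)
    (h : -(d2 * ystar) * u' / u ^ 2 = -d1 * (d2 * ystar / u) + 1 - ystar * u) :
    u' = u / d2 * (u ^ 2 - u / ystar + d1 * d2) := by
  field_simp at h ⊢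
  linear_combination -h

end BoostConverter

open BoostConverter in
theorem boost_zero_dynamics_general
    (d1 d2 ystar : ℝ) (hd2 : 0 < d2) (hy : 0 < ystar)
    (x1 x2 u : ℝ → ℝ)
    (hu : Differentiable ℝ u)
    (heq1 : ∀ τ, deriv x1 τ = -d1 * x1 τ + 1 - x2 τ * u τ)
    (heq2 : ∀ τ, deriv x2 τ = -d2 * x2 τ + x1 τ * u τ)
    (hune : ∀ τ, u τ ≠ 0)
    (hx2c : ∀ τ, x2 τ = ystar) :
    ∀ τ, deriv u τ = (u τ / d2) * (u τ ^ 2 - u τ / ystar + d1 * d2) := by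
  intro τ
  have h1 := heq1 τ
  rw [x1_eq_of_x2_eq_const heq2 hune hx2c, deriv_const_div _ (hu τ) (hune τ), hx2c] at h1
  exact zero_dynamics_of_first_eq hd2.ne' hy.ne' (hune τ) h1

/-- zero dynamics of the scaled Boost converter with respect to the
constant output x2 = y⋆. -/
theorem boost_zero_dynamics
    (d1 d2 ystar : ℝ) (hd1 : 0 ≤ d1) (hd2 : 0 < d2) (hy : 0 < ystar)
    (x1 x2 u : ℝ → ℝ)
    (hx1 : Differentiable ℝ x1) (hx2 : Differentiable ℝ x2)
    (hu : Differentiable ℝ u)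
    (heq1 : ∀ τ, deriv x1 τ = -d1 * x1 τ + 1 - x2 τ * u τ)
    (heq2 : ∀ τ, deriv x2 τ = -d2 * x2 τ + x1 τ * u τ)
    (hune : ∀ τ, u τ ≠ 0)
    (hx2c : ∀ τ, x2 τ = ystar) :
    ∀ τ, deriv u τ = (u τ / d2) * (u τ ^ 2 - u τ / ystar + d1 * d2) :=
  boost_zero_dynamics_general d1 d2 ystar hd2 hy x1 x2 u hu heq1 heq2 hune hx2c
end

section
/- Let d1 > 0, d2 > 0, y⋆ > 0 with d1·d2 < 1/(4·y⋆²), and define h(u) := (u/d2)·(u² - u/y⋆ + d1·d2) and ū := (1/(2·y⋆))·(1 + √(1 - 4·d1·d2·y⋆²)). Then h(ū) = 0 and h'(ū) > 0; that is, the nonzero equilibrium of the zero dynamics corresponding to the minimal-current operating point is unstable (by linearization of the scalar equation u' = h(u)). -/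
/-! The equilibrium `ū` is the larger root of the quadratic factor `y⋆ u² - u + d1 d2 y⋆` of
`y⋆ d2 h(u) / u`. Since `h` vanishes at `ū` through that factor, `h'(ū)` is `ū / d2` times the
slope of the factor, and at the larger root the slope of a quadratic is the square root of its
discriminant, which is positive exactly when `d1 d2 < 1 / (4 y⋆²)`. -/

theorem quadratic_eq_zero_and_slope_eq_sqrt_discrim {a b c x : ℝ} (ha : a ≠ 0) (hD : 0 ≤ discrim a b c)
    (hx : x = (-b + √(discrim a b c)) / (2 * a)) :
    a * (x * x) + b * x + c = 0 ∧ 2 * a * x + b = √(discrim a b c) := by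
  refine ⟨(quadratic_eq_zero_iff ha (Real.mul_self_sqrt hD).symm x).2 (Or.inl hx), ?_⟩
  rw [hx]
  field_simp
  ring

theorem HasDerivAt.mul_of_right_eq_zero {𝕜 : Type*} [NontriviallyNormedField 𝕜]
    {f g : 𝕜 → 𝕜} {f' g' x : 𝕜} (hf : HasDerivAt f f' x) (hg : HasDerivAt g g' x)
    (hgx : g x = 0) : HasDerivAt (fun u => f u * g u) (f x * g') x := by
  have := hf.mul hg
  rwa [hgx, mul_zero, zero_add] at this

theorem boost_zero_dynamics_unstable_equilibrium_general
    (d1 d2 ystar : ℝ) (hd2 : 0 < d2) (hy : 0 < ystar)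
    (hcond : d1 * d2 < 1 / (4 * ystar ^ 2))
    (h : ℝ → ℝ)
    (hh : ∀ u : ℝ, h u = (u / d2) * (u ^ 2 - u / ystar + d1 * d2))
    (ubar : ℝ)
    (hubar : ubar = (1 / (2 * ystar)) * (1 + Real.sqrt (1 - 4 * d1 * d2 * ystar ^ 2))) :
    h ubar = 0 ∧ 0 < deriv h ubar := by
  have hdiscrim : discrim ystar (-1) (d1 * d2 * ystar) = 1 - 4 * d1 * d2 * ystar ^ 2 := by
    rw [discrim]; ring
  have hD : 0 < 1 - 4 * d1 * d2 * ystar ^ 2 := by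
    rw [lt_div_iff₀ (by positivity)] at hcond
    linarith
  obtain ⟨hroot, hslope⟩ := quadratic_eq_zero_and_slope_eq_sqrt_discrim (x := ubar) hy.ne' (hdiscrim ▸ hD.le)
    (by rw [hubar, hdiscrim]; field_simp)
  rw [hdiscrim] at hslope
  have hfactor : ubar ^ 2 - ubar / ystar + d1 * d2 = 0 := by
    field_simp
    linarith
  have hderiv : HasDerivAt h (ubar / d2 * (2 * ubar - 1 / ystar)) ubar := by
    have hfactor_deriv : HasDerivAt (fun u => u ^ 2 - u / ystar + d1 * d2)
        (2 * ubar - 1 / ystar) ubar := by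
      simpa using ((hasDerivAt_pow 2 ubar).fun_sub
        ((hasDerivAt_id' ubar).div_const ystar)).add_const (d1 * d2)
    rw [funext hh]
    exact ((hasDerivAt_id' ubar).div_const d2).mul_of_right_eq_zero hfactor_deriv hfactor
  refine ⟨by rw [hh, hfactor, mul_zero], ?_⟩
  have hubar_pos : 0 < ubar := by rw [hubar]; positivity
  have hslope' : 2 * ubar - 1 / ystar = √(1 - 4 * d1 * d2 * ystar ^ 2) / ystar := by
    rw [eq_div_iff hy.ne', ← hslope]
    field_simp
    ring
  rw [hderiv.deriv, hslope']
  have hsqrt_pos := Real.sqrt_pos.2 hD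
  positivity

/-- the nonzero equilibrium of the zero dynamics corresponding to the
minimal-current operating point is unstable (h(ū) = 0 and h'(ū) > 0). -/
theorem boost_zero_dynamics_unstable_equilibrium
    (d1 d2 ystar : ℝ) (hd1 : 0 < d1) (hd2 : 0 < d2) (hy : 0 < ystar)
    (hcond : d1 * d2 < 1 / (4 * ystar ^ 2))
    (h : ℝ → ℝ)
    (hh : ∀ u : ℝ, h u = (u / d2) * (u ^ 2 - u / ystar + d1 * d2))
    (ubar : ℝ)
    (hubar : ubar = (1 / (2 * ystar)) * (1 + Real.sqrt (1 - 4 * d1 * d2 * ystar ^ 2))) :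
    h ubar = 0 ∧ 0 < deriv h ubar :=
  boost_zero_dynamics_unstable_equilibrium_general d1 d2 ystar hd2 hy hcond h hh ubar hubar
end

section
/- Let d2 > 0, y⋆ > 0, KP ≥ 0, KI > 0, u0 ∈ ℝ and set d1 = 0, and let χ̄ := (d2·y⋆², y⋆, (1 - u0·y⋆)/(KI·y⋆)) be the unique equilibrium of the PI closed-loop vector field f. Then the Jacobian matrix ∇f(χ̄) has a real eigenvalue λ > 0. Consequently the equilibrium is unstable for all circuit parameters and all settings of the PI gains. -/
/-!
The Jacobian of the closed-loop field has determinant `KI * χ₂ * u(χ)` at every point, and at the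
equilibrium `u = 1 / y⋆`, so `det ∇f(χ̄) = KI > 0`. The characteristic polynomial of an
endomorphism of an odd-dimensional real space is monic of odd degree and equals `-det` at `0`;
a positive determinant therefore forces a positive real root.
-/

open Polynomial Module in
theorem Module.End.exists_pos_hasEigenvalue_of_det_pos {V : Type*} [AddCommGroup V]
    [Module ℝ V] [FiniteDimensional ℝ V] (f : End ℝ V) (hodd : Odd (finrank ℝ V))
    (hdet : 0 < LinearMap.det f) : ∃ μ > 0, f.HasEigenvalue μ := by
  set p := f.charpoly
  have hdeg : 0 < p.degree := by
    rw [degree_eq_natDegree f.charpoly_monic.ne_zero, LinearMap.charpoly_natDegree]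
    exact_mod_cast hodd.pos
  have hp0 : p.eval 0 < 0 := by
    have h := LinearMap.det_eq_sign_charpoly_coeff f
    rw [hodd.neg_one_pow, neg_one_mul] at h
    rw [← coeff_zero_eq_eval_zero]
    linarith
  obtain ⟨M, hpM, hM⟩ := ((tendsto_atTop_of_leadingCoeff_nonneg p hdeg
    (f.charpoly_monic.leadingCoeff ▸ zero_le_one)).eventually_gt_atTop 0
    |>.and (Filter.eventually_gt_atTop 0)).exists
  obtain ⟨μ, hμ, hroot⟩ := intermediate_value_Ioo hM.le p.continuousOn ⟨hp0, hpM⟩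
  exact ⟨μ, hμ.1, (Module.End.hasEigenvalue_iff_isRoot_charpoly f μ).2 hroot⟩

theorem LinearMap.det_prod_prod_eq_det_fin_three {R : Type*} [CommRing R]
    (L : (R × R × R) →ₗ[R] R × R × R) :
    LinearMap.det L = Matrix.det !![(L (1, 0, 0)).1, (L (0, 1, 0)).1, (L (0, 0, 1)).1;
      (L (1, 0, 0)).2.1, (L (0, 1, 0)).2.1, (L (0, 0, 1)).2.1;
      (L (1, 0, 0)).2.2, (L (0, 1, 0)).2.2, (L (0, 0, 1)).2.2] := by
  let e : (R × R × R) ≃ₗ[R] (Fin 3 → R) :=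
    ((LinearEquiv.refl R R).prodCongr (LinearEquiv.finTwoArrow R R).symm).trans
      (Fin.consLinearEquiv R fun _ : Fin 3 => R)
  rw [← LinearMap.det_conj L e, ← LinearMap.det_toMatrix']
  congr 1
  ext i j
  fin_cases i <;> fin_cases j <;> simp [e, LinearMap.toMatrix'_apply, Fin.tail]

def piControl (ystar KP KI u0 : ℝ) (χ : ℝ × ℝ × ℝ) : ℝ :=
  u0 + KI * χ.2.2 + KP * (ystar - χ.2.1)

def piClosedLoop (d2 ystar KP KI u0 : ℝ) (χ : ℝ × ℝ × ℝ) : ℝ × ℝ × ℝ :=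
  (1 - piControl ystar KP KI u0 χ * χ.2.1,
   -d2 * χ.2.1 + piControl ystar KP KI u0 χ * χ.1,
   ystar - χ.2.1)

section

variable {d2 ystar KP KI u0 : ℝ} {χ : ℝ × ℝ × ℝ}

theorem fderiv_piClosedLoop_apply (v : ℝ × ℝ × ℝ) :
    fderiv ℝ (piClosedLoop d2 ystar KP KI u0) χ v =
      (-(piControl ystar KP KI u0 χ * v.2.1 + (KI * v.2.2 - KP * v.2.1) * χ.2.1),
       -d2 * v.2.1 + piControl ystar KP KI u0 χ * v.1 + (KI * v.2.2 - KP * v.2.1) * χ.1,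
       -v.2.1) := by
  have h₁ : HasFDerivAt (fun χ : ℝ × ℝ × ℝ => χ.1) _ χ := hasFDerivAt_fst (𝕜 := ℝ)
  have h₂ : HasFDerivAt (fun χ : ℝ × ℝ × ℝ => χ.2.1) _ χ := (hasFDerivAt_snd (𝕜 := ℝ)).fst
  have h₃ : HasFDerivAt (fun χ : ℝ × ℝ × ℝ => χ.2.2) _ χ := (hasFDerivAt_snd (𝕜 := ℝ)).snd
  have hu : HasFDerivAt (piControl ystar KP KI u0) _ χ :=
    ((h₃.const_mul KI).const_add u0).add ((h₂.const_sub ystar).const_mul KP)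
  have hf : HasFDerivAt (piClosedLoop d2 ystar KP KI u0) _ χ :=
    ((hu.mul h₂).const_sub 1).prodMk (((h₂.const_mul (-d2)).add (hu.mul h₁)).prodMk
      (h₂.const_sub ystar))
  rw [hf.fderiv]
  simp only [ContinuousLinearMap.prod_apply, add_apply, smul_apply, neg_apply,
    ContinuousLinearMap.comp_apply, ContinuousLinearMap.coe_fst', ContinuousLinearMap.coe_snd',
    smul_eq_mul]
  refine Prod.ext ?_ (Prod.ext ?_ ?_) <;> ring

-- Expanding along the last row `(0, -1, 0)` gives `-(∂f₁/∂χ₃) (∂f₂/∂χ₁) = KI χ₂ u(χ)`.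
theorem det_fderiv_piClosedLoop :
    LinearMap.det (fderiv ℝ (piClosedLoop d2 ystar KP KI u0) χ : Module.End ℝ (ℝ × ℝ × ℝ)) =
      KI * χ.2.1 * piControl ystar KP KI u0 χ := by
  rw [LinearMap.det_prod_prod_eq_det_fin_three]
  simp [fderiv_piClosedLoop_apply, Matrix.det_fin_three]

theorem piControl_equilibrium (hy : ystar ≠ 0) (hKI : KI ≠ 0) :
    piControl ystar KP KI u0 (d2 * ystar ^ 2, ystar, (1 - u0 * ystar) / (KI * ystar)) =
      ystar⁻¹ := by
  unfold piControl
  field_simp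
  ring

end

theorem boost_pi_unstable_d1_zero_general
    (d2 ystar KP KI u0 : ℝ) (hy : 0 < ystar)
    (hKI : 0 < KI)
    (f : ℝ × ℝ × ℝ → ℝ × ℝ × ℝ)
    (hf : ∀ χ : ℝ × ℝ × ℝ,
      f χ = (1 - (u0 + KI * χ.2.2 + KP * (ystar - χ.2.1)) * χ.2.1,
             -d2 * χ.2.1 + (u0 + KI * χ.2.2 + KP * (ystar - χ.2.1)) * χ.1,
             ystar - χ.2.1))
    (χbar : ℝ × ℝ × ℝ)
    (hχbar : χbar = (d2 * ystar ^ 2, ystar, (1 - u0 * ystar) / (KI * ystar))) :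
    ∃ lam : ℝ, 0 < lam ∧ ∃ v : ℝ × ℝ × ℝ, v ≠ 0 ∧ fderiv ℝ f χbar v = lam • v := by
  have hfield : f = piClosedLoop d2 ystar KP KI u0 := funext hf
  have hdet : LinearMap.det (fderiv ℝ f χbar : Module.End ℝ (ℝ × ℝ × ℝ)) = KI := by
    rw [hfield, det_fderiv_piClosedLoop, hχbar, piControl_equilibrium hy.ne' hKI.ne']
    field_simp
  obtain ⟨μ, hμ, hev⟩ := Module.End.exists_pos_hasEigenvalue_of_det_pos _
    (by simp [Nat.odd_iff]) (hdet ▸ hKI)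
  obtain ⟨v, hv⟩ := hev.exists_hasEigenvector
  exact ⟨μ, hμ, v, hv.2, hv.apply_eq_smul⟩

/-- with d1 = 0 the Jacobian of the PI closed-loop vector field at the
unique equilibrium has a real eigenvalue λ > 0, hence the equilibrium is unstable for
all circuit parameters and all settings of the PI gains. -/
theorem boost_pi_unstable_d1_zero
    (d2 ystar KP KI u0 : ℝ) (hd2 : 0 < d2) (hy : 0 < ystar)
    (hKP : 0 ≤ KP) (hKI : 0 < KI)
    (f : ℝ × ℝ × ℝ → ℝ × ℝ × ℝ)
    (hf : ∀ χ : ℝ × ℝ × ℝ,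
      f χ = (1 - (u0 + KI * χ.2.2 + KP * (ystar - χ.2.1)) * χ.2.1,
             -d2 * χ.2.1 + (u0 + KI * χ.2.2 + KP * (ystar - χ.2.1)) * χ.1,
             ystar - χ.2.1))
    (χbar : ℝ × ℝ × ℝ)
    (hχbar : χbar = (d2 * ystar ^ 2, ystar, (1 - u0 * ystar) / (KI * ystar))) :
    ∃ lam : ℝ, 0 < lam ∧ ∃ v : ℝ × ℝ × ℝ, v ≠ 0 ∧ fderiv ℝ f χbar v = lam • v :=
  boost_pi_unstable_d1_zero_general d2 ystar KP KI u0 hy hKI f hf χbar hχbar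
end

section
/- Let d2 > 0, y⋆ > 0, KP ≥ 0, KI > 0, u0 ∈ ℝ and set d1 = 0, and let χ̄ := (d2·y⋆², y⋆, (1 - u0·y⋆)/(KI·y⋆)). Then the determinant of the Jacobian matrix ∇f(χ̄) of the PI closed-loop vector field equals KI; equivalently, the constant coefficient a0 of the characteristic polynomial λ³ + a2·λ² + a1·λ + a0 of ∇f(χ̄) equals -KI < 0. -/
/-!
The PI law `u = u0 + KI χ3 + KP (y⋆ - χ2)` enters the third column of the Jacobian only through
`∂u/∂χ3 = KI`, and the third row is `(0, -1, 0)`. Expanding along that row leaves a `2 × 2` minor,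
so `det ∇f(χ) = KI · χ2 · u(χ)` for every `χ`. At the equilibrium `χ2 = y⋆`, and the integrator
state is chosen so that `u = 1 / y⋆`; hence the determinant is `KI`.
In dimension three the constant coefficient of the characteristic polynomial is minus the determinant.
-/

section Triple

variable (R : Type*) [Semiring R]

def tripleEquivFun : (R × R × R) ≃ₗ[R] (Fin 3 → R) where
  toFun χ := ![χ.1, χ.2.1, χ.2.2]
  invFun v := (v 0, v 1, v 2)
  map_add' a b := by funext i; fin_cases i <;> simp
  map_smul' c a := by funext i; fin_cases i <;> simp
  left_inv χ := by simp
  right_inv v := by funext i; fin_cases i <;> simp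

noncomputable def tripleBasis : Module.Basis (Fin 3) R (R × R × R) :=
  .ofEquivFun (tripleEquivFun R)

end Triple

theorem LinearMap.charpoly_coeff_zero_of_odd_finrank {R M : Type*} [CommRing R]
    [AddCommGroup M] [Module R M] [Module.Free R M] [Module.Finite R M] (φ : M →ₗ[R] M)
    (h : Odd (Module.finrank R M)) : φ.charpoly.coeff 0 = -LinearMap.det φ := by
  rw [LinearMap.det_eq_sign_charpoly_coeff, h.neg_one_pow, neg_one_mul, neg_neg]

namespace PIClosedLoop

open ContinuousLinearMap

variable (d2 ystar KP KI u0 : ℝ)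

def input (χ : ℝ × ℝ × ℝ) : ℝ := u0 + KI * χ.2.2 + KP * (ystar - χ.2.1)

def field (χ : ℝ × ℝ × ℝ) : ℝ × ℝ × ℝ :=
  (1 - input ystar KP KI u0 χ * χ.2.1, -d2 * χ.2.1 + input ystar KP KI u0 χ * χ.1, ystar - χ.2.1)

noncomputable def equilibrium : ℝ × ℝ × ℝ := (d2 * ystar ^ 2, ystar, (1 - u0 * ystar) / (KI * ystar))

local notation "π₁" => (fst ℝ ℝ (ℝ × ℝ) : ℝ × ℝ × ℝ →L[ℝ] ℝ)
local notation "π₂" => (comp (fst ℝ ℝ ℝ) (snd ℝ ℝ (ℝ × ℝ)) : ℝ × ℝ × ℝ →L[ℝ] ℝ)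
local notation "π₃" => (comp (snd ℝ ℝ ℝ) (snd ℝ ℝ (ℝ × ℝ)) : ℝ × ℝ × ℝ →L[ℝ] ℝ)

theorem hasFDerivAt_snd_fst (χ : ℝ × ℝ × ℝ) : HasFDerivAt (fun χ : ℝ × ℝ × ℝ => χ.2.1) π₂ χ :=
  hasFDerivAt_fst.comp χ hasFDerivAt_snd

theorem hasFDerivAt_snd_snd (χ : ℝ × ℝ × ℝ) : HasFDerivAt (fun χ : ℝ × ℝ × ℝ => χ.2.2) π₃ χ :=
  hasFDerivAt_snd.comp χ hasFDerivAt_snd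

theorem hasFDerivAt_input (χ : ℝ × ℝ × ℝ) :
    HasFDerivAt (input ystar KP KI u0) (KI • π₃ - KP • π₂) χ := by
  rw [show KI • π₃ - KP • π₂ = KI • π₃ + KP • -π₂ by rw [smul_neg, sub_eq_add_neg]]
  exact (((hasFDerivAt_snd_snd χ).const_mul KI).const_add u0).add
    (((hasFDerivAt_snd_fst χ).const_sub ystar).const_mul KP)

theorem hasFDerivAt_field (χ : ℝ × ℝ × ℝ) :
    HasFDerivAt (field d2 ystar KP KI u0)
      ((-(input ystar KP KI u0 χ • π₂ + χ.2.1 • (KI • π₃ - KP • π₂))).prod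
        ((-d2 • π₂ + (input ystar KP KI u0 χ • π₁ + χ.1 • (KI • π₃ - KP • π₂))).prod (-π₂))) χ := by
  have h₁ : HasFDerivAt (fun χ : ℝ × ℝ × ℝ => χ.1) π₁ χ := hasFDerivAt_fst
  have h₂ := hasFDerivAt_snd_fst χ
  have hu := hasFDerivAt_input ystar KP KI u0 χ
  exact ((hu.mul h₂).const_sub 1).prodMk
    (((h₂.const_mul (-d2)).add (hu.mul h₁)).prodMk (h₂.const_sub ystar))

theorem det_fderiv_field (χ : ℝ × ℝ × ℝ) :
    LinearMap.det (fderiv ℝ (field d2 ystar KP KI u0) χ : (ℝ × ℝ × ℝ) →ₗ[ℝ] ℝ × ℝ × ℝ) =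
      KI * χ.2.1 * input ystar KP KI u0 χ := by
  rw [(hasFDerivAt_field d2 ystar KP KI u0 χ).fderiv, ← LinearMap.det_toMatrix (tripleBasis ℝ),
    Matrix.det_fin_three]
  simp [LinearMap.toMatrix_apply, tripleBasis, tripleEquivFun, -mul_eq_mul_right_iff]
  ring

theorem equilibrium_mul_input_equilibrium (hy : ystar ≠ 0) (hKI : KI ≠ 0) :
    (equilibrium d2 ystar KI u0).2.1 * input ystar KP KI u0 (equilibrium d2 ystar KI u0) = 1 := by
  simp only [input, equilibrium]
  field_simp
  ring

end PIClosedLoop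

theorem boost_pi_jacobian_det_d1_zero_general
    (d2 ystar KP KI u0 : ℝ) (hy : 0 < ystar)
    (hKI : 0 < KI)
    (f : ℝ × ℝ × ℝ → ℝ × ℝ × ℝ)
    (hf : ∀ χ : ℝ × ℝ × ℝ,
      f χ = (1 - (u0 + KI * χ.2.2 + KP * (ystar - χ.2.1)) * χ.2.1,
             -d2 * χ.2.1 + (u0 + KI * χ.2.2 + KP * (ystar - χ.2.1)) * χ.1,
             ystar - χ.2.1))
    (χbar : ℝ × ℝ × ℝ)
    (hχbar : χbar = (d2 * ystar ^ 2, ystar, (1 - u0 * ystar) / (KI * ystar))) :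
    LinearMap.det ((fderiv ℝ f χbar : ℝ × ℝ × ℝ →L[ℝ] ℝ × ℝ × ℝ) :
        ℝ × ℝ × ℝ →ₗ[ℝ] ℝ × ℝ × ℝ) = KI ∧
    (LinearMap.charpoly (((fderiv ℝ f χbar : ℝ × ℝ × ℝ →L[ℝ] ℝ × ℝ × ℝ) :
        ℝ × ℝ × ℝ →ₗ[ℝ] ℝ × ℝ × ℝ))).coeff 0 = -KI ∧
    -KI < 0 := by
  have hf' : f = PIClosedLoop.field d2 ystar KP KI u0 := funext hf
  have hχbar' : χbar = PIClosedLoop.equilibrium d2 ystar KI u0 := hχbar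
  have hdet : LinearMap.det (fderiv ℝ f χbar : (ℝ × ℝ × ℝ) →ₗ[ℝ] ℝ × ℝ × ℝ) = KI := by
    rw [hf', hχbar', PIClosedLoop.det_fderiv_field, mul_assoc,
      PIClosedLoop.equilibrium_mul_input_equilibrium d2 ystar KP KI u0 hy.ne' hKI.ne', mul_one]
  refine ⟨hdet, ?_, neg_neg_of_pos hKI⟩
  rw [LinearMap.charpoly_coeff_zero_of_odd_finrank _ (by simp [Nat.odd_iff]), hdet]

/-- with d1 = 0 the determinant of the Jacobian of the PI closed-loop
vector field at the unique equilibrium equals KI; equivalently the constant coefficient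
of its characteristic polynomial equals -KI < 0. -/
theorem boost_pi_jacobian_det_d1_zero
    (d2 ystar KP KI u0 : ℝ) (hd2 : 0 < d2) (hy : 0 < ystar)
    (hKP : 0 ≤ KP) (hKI : 0 < KI)
    (f : ℝ × ℝ × ℝ → ℝ × ℝ × ℝ)
    (hf : ∀ χ : ℝ × ℝ × ℝ,
      f χ = (1 - (u0 + KI * χ.2.2 + KP * (ystar - χ.2.1)) * χ.2.1,
             -d2 * χ.2.1 + (u0 + KI * χ.2.2 + KP * (ystar - χ.2.1)) * χ.1,
             ystar - χ.2.1))
    (χbar : ℝ × ℝ × ℝ)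
    (hχbar : χbar = (d2 * ystar ^ 2, ystar, (1 - u0 * ystar) / (KI * ystar))) :
    LinearMap.det ((fderiv ℝ f χbar : ℝ × ℝ × ℝ →L[ℝ] ℝ × ℝ × ℝ) :
        ℝ × ℝ × ℝ →ₗ[ℝ] ℝ × ℝ × ℝ) = KI ∧
    (LinearMap.charpoly (((fderiv ℝ f χbar : ℝ × ℝ × ℝ →L[ℝ] ℝ × ℝ × ℝ) :
        ℝ × ℝ × ℝ →ₗ[ℝ] ℝ × ℝ × ℝ))).coeff 0 = -KI ∧
    -KI < 0 :=
  boost_pi_jacobian_det_d1_zero_general d2 ystar KP KI u0 hy hKI f hf χbar hχbar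
end

section
/- Let d1 > 0, d2 > 0, y⋆ > 0 with d1·d2 < 1/(4·y⋆²), KP ≥ 0, KI > 0, u0 ∈ ℝ, and set r := (1/2)·√(1 - 4·d1·d2·y⋆²). Then the PI closed-loop vector field f satisfies f(χ̄) = 0 if and only if χ̄ = χ̄^u or χ̄ = χ̄^s, where χ̄^u := ((1/(2·d1))·(1 - 2r), y⋆, (1 - d1·(1/(2·d1))·(1 - 2r) - u0·y⋆)/(KI·y⋆)) and χ̄^s := ((1/(2·d1))·(1 + 2r), y⋆, (1 - d1·(1/(2·d1))·(1 + 2r) - u0·y⋆)/(KI·y⋆)); that is, the closed-loop system has exactly two equilibrium points. -/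
/-!
On an equilibrium the integrator forces `χ₂ = y⋆`. Eliminating the control `u` from the first two
equations (multiply them by `χ₁` and `y⋆` and add) leaves the quadratic
`d₁ χ₁² - χ₁ + d₂ y⋆² = 0`, whose discriminant `1 - 4 d₁ d₂ y⋆² = (2r)²` is nonnegative; each of its
two roots then determines the integrator state `χ₃` uniquely through `u y⋆ = 1 - d₁ χ₁`.
-/

theorem quadratic_eq_zero_iff_of_discrim {K : Type*} [Field K] [NeZero (2 : K)] {a c r x : K}
    (ha : a ≠ 0) (hr : 4 * r ^ 2 = 1 - 4 * a * c) :
    a * (x * x) + -1 * x + c = 0 ↔ x = 1 / (2 * a) * (1 - 2 * r) ∨ x = 1 / (2 * a) * (1 + 2 * r) := by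
  rw [quadratic_eq_zero_iff ha (s := 2 * r) (by rw [discrim]; linear_combination -hr), or_comm]
  congr! 2 <;> field_simp

noncomputable section

namespace BoostPI

variable (d1 d2 ystar KP KI u0 : ℝ)

def closedLoop (χ : ℝ × ℝ × ℝ) : ℝ × ℝ × ℝ :=
  (-d1 * χ.1 + 1 - (u0 + KI * χ.2.2 + KP * (ystar - χ.2.1)) * χ.2.1,
   -d2 * χ.2.1 + (u0 + KI * χ.2.2 + KP * (ystar - χ.2.1)) * χ.1,
   ystar - χ.2.1)

def equilibriumAt (a : ℝ) : ℝ × ℝ × ℝ :=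
  (a, ystar, (1 - d1 * a - u0 * ystar) / (KI * ystar))

variable {d1 d2 ystar KP KI u0}

theorem closedLoop_eq_zero_iff (hy : ystar ≠ 0) (hKI : KI ≠ 0) (χ : ℝ × ℝ × ℝ) :
    closedLoop d1 d2 ystar KP KI u0 χ = 0 ↔
      d1 * (χ.1 * χ.1) + -1 * χ.1 + d2 * ystar ^ 2 = 0 ∧ χ = equilibriumAt d1 ystar KI u0 χ.1 := by
  obtain ⟨a, b, c⟩ := χ
  simp only [closedLoop, equilibriumAt, Prod.ext_iff, Prod.fst_zero, Prod.snd_zero, true_and]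
  constructor
  · rintro ⟨h1, h2, h3⟩
    obtain rfl : b = ystar := by linarith
    refine ⟨by linear_combination (-a) * h1 + (-b) * h2, rfl, ?_⟩
    field_simp
    linear_combination -h1
  · rintro ⟨hq, rfl, rfl⟩
    refine ⟨?_, ?_, sub_self b⟩
    · field_simp
      ring
    · field_simp
      linear_combination -hq

end BoostPI

end

open BoostPI in
theorem boost_pi_two_equilibria_general
    (d1 d2 ystar KP KI u0 : ℝ) (hd1 : 0 < d1) (hy : 0 < ystar)
    (hcond : d1 * d2 < 1 / (4 * ystar ^ 2)) (hKI : 0 < KI)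
    (r : ℝ) (hr : r = (1 / 2) * Real.sqrt (1 - 4 * d1 * d2 * ystar ^ 2))
    (f : ℝ × ℝ × ℝ → ℝ × ℝ × ℝ)
    (hf : ∀ χ : ℝ × ℝ × ℝ,
      f χ = (-d1 * χ.1 + 1 - (u0 + KI * χ.2.2 + KP * (ystar - χ.2.1)) * χ.2.1,
             -d2 * χ.2.1 + (u0 + KI * χ.2.2 + KP * (ystar - χ.2.1)) * χ.1,
             ystar - χ.2.1))
    (χu χs : ℝ × ℝ × ℝ)
    (hχu : χu = ((1 / (2 * d1)) * (1 - 2 * r), ystar,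
      (1 - d1 * ((1 / (2 * d1)) * (1 - 2 * r)) - u0 * ystar) / (KI * ystar)))
    (hχs : χs = ((1 / (2 * d1)) * (1 + 2 * r), ystar,
      (1 - d1 * ((1 / (2 * d1)) * (1 + 2 * r)) - u0 * ystar) / (KI * ystar))) :
    ∀ χ : ℝ × ℝ × ℝ, f χ = 0 ↔ (χ = χu ∨ χ = χs) := by
  have hdiscrim_nonneg : 0 ≤ 1 - 4 * d1 * d2 * ystar ^ 2 := by
    rw [lt_div_iff₀ (by positivity)] at hcond
    linarith
  have hdiscrim : 4 * r ^ 2 = 1 - 4 * d1 * (d2 * ystar ^ 2) := by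
    rw [hr, mul_pow, Real.sq_sqrt hdiscrim_nonneg]
    ring
  change χu = equilibriumAt d1 ystar KI u0 _ at hχu
  change χs = equilibriumAt d1 ystar KI u0 _ at hχs
  intro χ
  rw [hf, ← closedLoop, closedLoop_eq_zero_iff hy.ne' hKI.ne',
    quadratic_eq_zero_iff_of_discrim hd1.ne' hdiscrim, hχu, hχs]
  constructor
  · rintro ⟨ha | ha, hχ⟩ <;> rw [← ha] <;> simp only [← hχ, true_or, or_true]
  · rintro (rfl | rfl) <;> simp [equilibriumAt]

/-- with d1 > 0 (and the equilibrium existence condition) the PI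
closed-loop system has exactly two equilibrium points. -/
theorem boost_pi_two_equilibria
    (d1 d2 ystar KP KI u0 : ℝ) (hd1 : 0 < d1) (hd2 : 0 < d2) (hy : 0 < ystar)
    (hcond : d1 * d2 < 1 / (4 * ystar ^ 2)) (hKP : 0 ≤ KP) (hKI : 0 < KI)
    (r : ℝ) (hr : r = (1 / 2) * Real.sqrt (1 - 4 * d1 * d2 * ystar ^ 2))
    (f : ℝ × ℝ × ℝ → ℝ × ℝ × ℝ)
    (hf : ∀ χ : ℝ × ℝ × ℝ,
      f χ = (-d1 * χ.1 + 1 - (u0 + KI * χ.2.2 + KP * (ystar - χ.2.1)) * χ.2.1,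
             -d2 * χ.2.1 + (u0 + KI * χ.2.2 + KP * (ystar - χ.2.1)) * χ.1,
             ystar - χ.2.1))
    (χu χs : ℝ × ℝ × ℝ)
    (hχu : χu = ((1 / (2 * d1)) * (1 - 2 * r), ystar,
      (1 - d1 * ((1 / (2 * d1)) * (1 - 2 * r)) - u0 * ystar) / (KI * ystar)))
    (hχs : χs = ((1 / (2 * d1)) * (1 + 2 * r), ystar,
      (1 - d1 * ((1 / (2 * d1)) * (1 + 2 * r)) - u0 * ystar) / (KI * ystar))) :
    ∀ χ : ℝ × ℝ × ℝ, f χ = 0 ↔ (χ = χu ∨ χ = χs) :=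
  boost_pi_two_equilibria_general d1 d2 ystar KP KI u0 hd1 hy hcond hKI r hr f hf χu χs hχu hχs
end

section
/- Let d1 > 0, d2 > 0, y⋆ > 0 with d1·d2 < 1/(4·y⋆²), KP ≥ 0, KI > 0, u0 ∈ ℝ, r := (1/2)·√(1 - 4·d1·d2·y⋆²), and let χ̄^u := ((1/(2·d1))·(1 - 2r), y⋆, (1 - d1·(1/(2·d1))·(1 - 2r) - u0·y⋆)/(KI·y⋆)) be the minimal-current equilibrium of the PI closed-loop vector field f. Then the Jacobian matrix ∇f(χ̄^u) has a real eigenvalue λ > 0. Consequently χ̄^u is unstable for all choices of the tuning gains. -/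
/-!
At an equilibrium the first equation gives `u y = 1 - d1 x`, so the constant term of the
characteristic polynomial `det (λ - ∇f)` equals `KI (d1 x - u y) = KI (2 d1 x - 1)`. On the
minimal-current branch `2 d1 x = 1 - 2 r < 1`, so this monic cubic is negative at `0` and has a
positive root `λ`; an eigenvector is `(w, λ, -1)`, with `w` read off the first row.
-/

open Set

theorem exists_pos_root_of_cubic {a b c : ℝ} (hc : c < 0) :
    ∃ x : ℝ, 0 < x ∧ x ^ 3 + a * x ^ 2 + b * x + c = 0 := by
  set M := 1 + |a| + |b| + |c|
  have hM : 1 ≤ M := by simp only [M]; linarith [abs_nonneg a, abs_nonneg b, abs_nonneg c]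
  have hpos : 0 < M ^ 3 + a * M ^ 2 + b * M + c := by
    have hb : |b| * M ≤ |b| * M ^ 2 := mul_le_mul_of_nonneg_left (by nlinarith) (abs_nonneg b)
    have hc' : |c| ≤ |c| * M ^ 2 := le_mul_of_one_le_right (abs_nonneg c) (by nlinarith)
    calc 0 < M ^ 2 := by positivity
      _ = M ^ 2 * (M - |a| - |b| - |c|) := by simp only [M]; ring
      _ ≤ M ^ 3 + a * M ^ 2 + b * M + c := by
        nlinarith [neg_abs_le a, neg_abs_le b, neg_abs_le c]
  obtain ⟨x, hx, hroot⟩ := intermediate_value_Ioo (zero_le_one.trans hM)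
    (f := fun x : ℝ => x ^ 3 + a * x ^ 2 + b * x + c) (by fun_prop)
    (show (0 : ℝ) ∈ Ioo _ _ by constructor <;> simpa)
  exact ⟨x, hx.1, hroot⟩

namespace BoostPI

variable (d1 d2 ystar KP KI u0 : ℝ)

def controlInput (χ : ℝ × ℝ × ℝ) : ℝ := u0 + KI * χ.2.2 + KP * (ystar - χ.2.1)

def closedLoopField (χ : ℝ × ℝ × ℝ) : ℝ × ℝ × ℝ :=
  (-d1 * χ.1 + 1 - controlInput ystar KP KI u0 χ * χ.2.1,
   -d2 * χ.2.1 + controlInput ystar KP KI u0 χ * χ.1,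
   ystar - χ.2.1)

theorem fderiv_closedLoopField_apply (χ v : ℝ × ℝ × ℝ) :
    fderiv ℝ (closedLoopField d1 d2 ystar KP KI u0) χ v =
      (-d1 * v.1 - controlInput ystar KP KI u0 χ * v.2.1 - (KI * v.2.2 - KP * v.2.1) * χ.2.1,
       -d2 * v.2.1 + controlInput ystar KP KI u0 χ * v.1 + (KI * v.2.2 - KP * v.2.1) * χ.1,
       -v.2.1) := by
  have h1 : fderiv ℝ (fun p : ℝ × ℝ × ℝ => p.1) χ v = v.1 := by
    rw [hasFDerivAt_fst.fderiv]; rfl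
  have h2 : fderiv ℝ (fun p : ℝ × ℝ × ℝ => p.2.1) χ v = v.2.1 := by
    rw [hasFDerivAt_snd.fst.fderiv]; rfl
  have h3 : fderiv ℝ (fun p : ℝ × ℝ × ℝ => p.2.2) χ v = v.2.2 := by
    rw [hasFDerivAt_snd.snd.fderiv]; rfl
  unfold closedLoopField controlInput
  simp (disch := fun_prop) only [neg_mul, DifferentiableAt.fderiv_prodMk, fderiv_fun_sub,
    fderiv_add_const, fderiv_fun_neg, fderiv_fun_mul, fderiv_fun_const, fderiv_fun_add,
    Pi.zero_apply, smul_zero, add_zero, zero_sub, smul_neg, smul_add,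
    ContinuousLinearMap.prod_apply, zero_apply, sub_apply, neg_apply,
    smul_apply, add_apply, smul_eq_mul, h1, h2, h3, Prod.mk.injEq, and_true]
  constructor <;> ring

theorem exists_pos_eigenvector_fderiv_closedLoopField (hd1 : 0 ≤ d1) (hKI : 0 < KI)
    (χ : ℝ × ℝ × ℝ) (hχ : d1 * χ.1 < controlInput ystar KP KI u0 χ * χ.2.1) :
    ∃ lam : ℝ, 0 < lam ∧ ∃ v : ℝ × ℝ × ℝ, v ≠ 0 ∧
      fderiv ℝ (closedLoopField d1 d2 ystar KP KI u0) χ v = lam • v := by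
  set u := controlInput ystar KP KI u0 χ
  -- The cubic is the characteristic polynomial of the Jacobian at `χ`,
  -- `(λ + d1) (λ² + (d2 + KP χ₁) λ + KI χ₁) - u ((KP χ₂ - u) λ + KI χ₂)`.
  obtain ⟨lam, hlam, hroot⟩ := exists_pos_root_of_cubic (a := d1 + d2 + KP * χ.1)
    (b := d1 * (d2 + KP * χ.1) + KI * χ.1 - u * (KP * χ.2.1 - u))
    (c := KI * (d1 * χ.1 - u * χ.2.1)) (mul_neg_of_pos_of_neg hKI (by linarith))
  have hd : lam + d1 ≠ 0 := by positivity
  set w := ((KP * χ.2.1 - u) * lam + KI * χ.2.1) / (lam + d1)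
  have hw : (lam + d1) * w = (KP * χ.2.1 - u) * lam + KI * χ.2.1 := mul_div_cancel₀ _ hd
  have huw : u * w = lam ^ 2 + (d2 + KP * χ.1) * lam + KI * χ.1 :=
    mul_left_cancel₀ hd (by linear_combination u * hw - hroot)
  refine ⟨lam, hlam, (w, lam, -1), by simp, ?_⟩
  rw [fderiv_closedLoopField_apply]
  simp only [Prod.smul_mk, smul_eq_mul, Prod.mk.injEq]
  exact ⟨by linear_combination -hw, by linear_combination huw, by ring⟩

end BoostPI

theorem boost_pi_min_current_unstable_general
    (d1 d2 ystar KP KI u0 : ℝ) (hd1 : 0 < d1) (hy : 0 < ystar)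
    (hcond : d1 * d2 < 1 / (4 * ystar ^ 2)) (hKI : 0 < KI)
    (r : ℝ) (hr : r = (1 / 2) * Real.sqrt (1 - 4 * d1 * d2 * ystar ^ 2))
    (f : ℝ × ℝ × ℝ → ℝ × ℝ × ℝ)
    (hf : ∀ χ : ℝ × ℝ × ℝ,
      f χ = (-d1 * χ.1 + 1 - (u0 + KI * χ.2.2 + KP * (ystar - χ.2.1)) * χ.2.1,
             -d2 * χ.2.1 + (u0 + KI * χ.2.2 + KP * (ystar - χ.2.1)) * χ.1,
             ystar - χ.2.1))
    (χu : ℝ × ℝ × ℝ)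
    (hχu : χu = ((1 / (2 * d1)) * (1 - 2 * r), ystar,
      (1 - d1 * ((1 / (2 * d1)) * (1 - 2 * r)) - u0 * ystar) / (KI * ystar))) :
    ∃ lam : ℝ, 0 < lam ∧ ∃ v : ℝ × ℝ × ℝ, v ≠ 0 ∧ fderiv ℝ f χu v = lam • v := by
  obtain rfl : f = BoostPI.closedLoopField d1 d2 ystar KP KI u0 := funext hf
  have hr_pos : 0 < r := by
    have hdisc : 0 < 1 - 4 * d1 * d2 * ystar ^ 2 := by
      rw [lt_div_iff₀ (by positivity)] at hcond
      linarith
    rw [hr]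
    exact mul_pos one_half_pos (Real.sqrt_pos.mpr hdisc)
  have hcurrent : d1 * χu.1 = (1 - 2 * r) / 2 := by
    rw [hχu]
    field_simp
  -- the first component of `f χu = 0`
  have hequilibrium : BoostPI.controlInput ystar KP KI u0 χu * χu.2.1 = 1 - d1 * χu.1 := by
    rw [hχu]
    unfold BoostPI.controlInput
    field_simp
    ring
  refine BoostPI.exists_pos_eigenvector_fderiv_closedLoopField d1 d2 ystar KP KI u0 hd1.le hKI
    χu ?_
  rw [hequilibrium, hcurrent]
  linarith

/-- the minimal-current equilibrium of the PI closed-loop system with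
d1 > 0 is unstable: the Jacobian has a real eigenvalue λ > 0, for all tuning gains. -/
theorem boost_pi_min_current_unstable
    (d1 d2 ystar KP KI u0 : ℝ) (hd1 : 0 < d1) (hd2 : 0 < d2) (hy : 0 < ystar)
    (hcond : d1 * d2 < 1 / (4 * ystar ^ 2)) (hKP : 0 ≤ KP) (hKI : 0 < KI)
    (r : ℝ) (hr : r = (1 / 2) * Real.sqrt (1 - 4 * d1 * d2 * ystar ^ 2))
    (f : ℝ × ℝ × ℝ → ℝ × ℝ × ℝ)
    (hf : ∀ χ : ℝ × ℝ × ℝ,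
      f χ = (-d1 * χ.1 + 1 - (u0 + KI * χ.2.2 + KP * (ystar - χ.2.1)) * χ.2.1,
             -d2 * χ.2.1 + (u0 + KI * χ.2.2 + KP * (ystar - χ.2.1)) * χ.1,
             ystar - χ.2.1))
    (χu : ℝ × ℝ × ℝ)
    (hχu : χu = ((1 / (2 * d1)) * (1 - 2 * r), ystar,
      (1 - d1 * ((1 / (2 * d1)) * (1 - 2 * r)) - u0 * ystar) / (KI * ystar))) :
    ∃ lam : ℝ, 0 < lam ∧ ∃ v : ℝ × ℝ × ℝ, v ≠ 0 ∧ fderiv ℝ f χu v = lam • v :=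
  boost_pi_min_current_unstable_general d1 d2 ystar KP KI u0 hd1 hy hcond hKI r hr f hf χu hχu
end

section
/- Let d1 > 0, d2 > 0, y⋆ > 0, KP ≥ 0, KI > 0 and r ∈ (0, 1/2), and define a0 := 2·KI·r, a1 := (1/(4·d1·y⋆²))·(4·d1²·d2·y⋆² + 8·r·KP·y⋆²·d1 + 4·(r - 1/2)²·d1 + 4·KI·y⋆²·(1/2 + r)), a2 := (KP/d1)·(1/2 + r) + d1 + d2. If KP ≥ (1/2)·d1² and KI ≥ (5/16)·d1/y⋆², then a1·a2 - a0 > 0. -/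
/-- the remaining Routh–Hurwitz condition a1·a2 - a0 > 0 holds under the
gain conditions KP ≥ d1²/2 and KI ≥ (5/16)·d1/y⋆². -/
theorem boost_pi_routh_hurwitz_condition
    (d1 d2 ystar KP KI : ℝ) (hd1 : 0 < d1) (hd2 : 0 < d2) (hy : 0 < ystar)
    (hKP : 0 ≤ KP) (hKI : 0 < KI)
    (r : ℝ) (hr : r ∈ Set.Ioo (0 : ℝ) (1 / 2))
    (a0 a1 a2 : ℝ)
    (ha0 : a0 = 2 * KI * r)
    (ha1 : a1 = (1 / (4 * d1 * ystar ^ 2)) *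
      (4 * d1 ^ 2 * d2 * ystar ^ 2 + 8 * r * KP * ystar ^ 2 * d1 +
        4 * (r - 1 / 2) ^ 2 * d1 + 4 * KI * ystar ^ 2 * (1 / 2 + r)))
    (ha2 : a2 = (KP / d1) * (1 / 2 + r) + d1 + d2)
    (hKPcond : KP ≥ (1 / 2) * d1 ^ 2)
    (hKIcond : KI ≥ (5 / 16) * d1 / ystar ^ 2) :
    0 < a1 * a2 - a0 := by
  obtain ⟨hr0, hr2⟩ := hr
  have hy2 : 0 < ystar ^ 2 := by positivity
  have hden : 0 < 4 * d1 * ystar ^ 2 := by positivity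
  have hA1 : KI * (1 / 2 + r) / d1 ≤ a1 := by
    rw [ha1, div_le_iff₀ hd1, div_mul_eq_mul_div, div_mul_eq_mul_div,
      le_div_iff₀ hden]
    nlinarith [mul_pos (mul_pos (mul_pos hd1 hd1) hd2) hy2,
      mul_nonneg (mul_nonneg (mul_nonneg hr0.le hKP) hy2.le)
        (mul_nonneg hd1.le hd1.le),
      mul_nonneg (sq_nonneg (r - 1 / 2)) (mul_nonneg hd1.le hd1.le)]
  have hA2 : d1 ≤ a2 := by
    rw [ha2]
    have : 0 ≤ (KP / d1) * (1 / 2 + r) := by positivity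
    linarith
  have hA1pos : 0 ≤ KI * (1 / 2 + r) / d1 := by positivity
  have hmul : KI * (1 / 2 + r) / d1 * d1 ≤ a1 * a2 :=
    mul_le_mul hA1 hA2 hd1.le (hA1pos.trans hA1)
  rw [div_mul_cancel₀ _ hd1.ne'] at hmul
  rw [ha0]
  nlinarith
end

section
/- Let d2 > 0, y⋆ > 0, α ∈ (0, 1) and set d1 = 0. Consider the closed-loop system on the half-plane {(x1, x2) : x2 > 0} given by dx1/dτ = 1 - x2·u(x2), dx2/dτ = -d2·x2 + x1·u(x2), with the static nonlinear voltage feedback u(x2) = (1/y⋆)·(x2/y⋆)^α. Then the point x⋆ := (d2·y⋆², y⋆) is an asymptotically stable equilibrium: it is an equilibrium, it is Lyapunov stable (for every ε > 0 there is δ > 0 such that every solution starting within distance δ of x⋆ stays within distance ε for all forward time), and there is a neighborhood of x⋆ from which every solution converges to x⋆ as τ → ∞. -/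
/-!
Write `e = x₁ - d₂y⋆²` and let `G` be the potential with `G(y⋆) = 0` and
`G'(x₂) = x₂ - y⋆ (x₂/y⋆)^(-α)`. The controller satisfies the matching identity
`1 - x₂ u(x₂) = -G'(x₂) u(x₂)`, so the closed loop reads `ė = -G' u`, `ẋ₂ = e u + h(x₂)` with
`h(x₂) (x₂ - y⋆) ≤ -d₂ (1 - α)/2 · (x₂ - y⋆)²` near `y⋆`. Along solutions the shaped energy
`e²/2 + G(x₂)` has derivative `G' h ≤ 0`, which does not see `e`; a small cross term
`-c e (x₂ - y⋆)` turns it into a strict Lyapunov function `V` with `V̇ ≤ -κ V` on a ball around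
`x⋆`, on which `V` is comparable to `‖x - x⋆‖²`. Grönwall's inequality together with a first exit
time argument then gives Lyapunov stability and exponential convergence to `x⋆`.
-/

open Real Set Filter Topology Metric

theorem Real.rpow_mem_uIcc_one {w p : ℝ} (hw : 0 < w) (hp0 : 0 ≤ p) (hp1 : p ≤ 1) :
    w ^ p ∈ uIcc 1 w := by
  rcases le_total w 1 with h | h
  · rw [uIcc_of_ge h]
    exact ⟨by simpa using rpow_le_rpow_of_exponent_ge hw h hp1, rpow_le_one hw.le h hp0⟩
  · rw [uIcc_of_le h]
    exact ⟨one_le_rpow h hp0, by simpa using rpow_le_rpow_of_exponent_le h hp1⟩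

theorem Real.abs_rpow_sub_one_le {w p : ℝ} (hw : 0 < w) (hp0 : 0 ≤ p) (hp1 : p ≤ 1) :
    |w ^ p - 1| ≤ |w - 1| :=
  abs_sub_left_of_mem_uIcc (rpow_mem_uIcc_one hw hp0 hp1)

theorem Real.one_sub_mul_min_mul_sq_le_sub_rpow_mul {w p : ℝ} (hw : 0 < w) (hp0 : 0 ≤ p)
    (hp1 : p ≤ 1) : (1 - p) * min w 1 * (w - 1) ^ 2 ≤ (w - w ^ p) * (w - 1) := by
  -- Bernoulli's inequality, for the exponent `p` if `1 ≤ w` and for `1 - p` if `w ≤ 1`.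
  rcases le_total w 1 with h | h
  · have hbern := rpow_one_add_le_one_add_mul_self (s := w - 1) (p := 1 - p) (by linarith)
      (by linarith) (by linarith)
    have hsplit : w ^ p * w ^ (1 - p) = w := by rw [← rpow_add hw]; simp
    have hwp : w ≤ w ^ p := by simpa using rpow_le_rpow_of_exponent_ge hw h hp1
    rw [min_eq_left h]
    simp only [add_sub_cancel] at hbern
    have hgap : w * ((1 - p) * (1 - w)) ≤ w ^ p - w := by
      calc w * ((1 - p) * (1 - w)) ≤ w ^ p * ((1 - p) * (1 - w)) := by gcongr
        _ ≤ w ^ p * (1 - w ^ (1 - p)) := by gcongr; linarith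
        _ = w ^ p - w := by rw [mul_sub, hsplit, mul_one]
    nlinarith [mul_le_mul_of_nonneg_right hgap (sub_nonneg.2 h)]
  · have hbern := rpow_one_add_le_one_add_mul_self (s := w - 1) (by linarith) hp0 hp1
    simp only [add_sub_cancel] at hbern
    rw [min_eq_right h]
    nlinarith

theorem le_of_hasDerivAt_of_mul_sub_nonneg {F F' : ℝ → ℝ} {s : Set ℝ} {x₀ z : ℝ}
    (hs : Convex ℝ s) (hx₀ : x₀ ∈ s) (hz : z ∈ s) (hF : ∀ x ∈ s, HasDerivAt F (F' x) x)
    (hF' : ∀ x ∈ s, 0 ≤ F' x * (x - x₀)) : F x₀ ≤ F z := by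
  have hcont : ∀ {a b}, a ∈ s → b ∈ s → ContinuousOn F (Icc a b) := fun ha hb x hx =>
    (hF x (hs.ordConnected.out ha hb hx)).continuousAt.continuousWithinAt
  have hderiv : ∀ {a b}, a ∈ s → b ∈ s → ∀ x ∈ interior (Icc a b),
      HasDerivWithinAt F (F' x) (interior (Icc a b)) x := fun ha hb x hx =>
    (hF x (hs.ordConnected.out ha hb (interior_subset hx))).hasDerivWithinAt
  rcases le_total x₀ z with h | h
  · refine monotoneOn_of_hasDerivWithinAt_nonneg (convex_Icc x₀ z) (hcont hx₀ hz)
      (hderiv hx₀ hz) (fun x hx => ?_) (left_mem_Icc.2 h) (right_mem_Icc.2 h) h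
    rw [interior_Icc] at hx
    have := hF' x (hs.ordConnected.out hx₀ hz (Ioo_subset_Icc_self hx))
    nlinarith [hx.1]
  · refine antitoneOn_of_hasDerivWithinAt_nonpos (convex_Icc z x₀) (hcont hz hx₀)
      (hderiv hz hx₀) (fun x hx => ?_) (left_mem_Icc.2 h) (right_mem_Icc.2 h) h
    rw [interior_Icc] at hx
    have := hF' x (hs.ordConnected.out hz hx₀ (Ioo_subset_Icc_self hx))
    nlinarith [hx.2]

theorem Prod.sq_norm_le_sq_add_sq (v : ℝ × ℝ) : ‖v‖ ^ 2 ≤ v.1 ^ 2 + v.2 ^ 2 := by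
  rw [Prod.norm_def, Real.norm_eq_abs, Real.norm_eq_abs]
  rcases le_total |v.1| |v.2| with h | h
  · rw [max_eq_right h, sq_abs]; nlinarith [sq_nonneg v.1]
  · rw [max_eq_left h, sq_abs]; nlinarith [sq_nonneg v.2]

theorem Prod.sq_add_sq_le_two_mul_sq_norm (v : ℝ × ℝ) : v.1 ^ 2 + v.2 ^ 2 ≤ 2 * ‖v‖ ^ 2 := by
  have h1 := pow_le_pow_left₀ (norm_nonneg _) (norm_fst_le v) 2
  have h2 := pow_le_pow_left₀ (norm_nonneg _) (norm_snd_le v) 2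
  rw [Real.norm_eq_abs, sq_abs] at h1 h2
  linarith

theorem ContinuousOn.forall_lt_of_forall_Icc_le {g : ℝ → ℝ} {a c : ℝ}
    (hg : ContinuousOn g (Ici a)) (ha : g a < c)
    (hstep : ∀ t > a, (∀ s ∈ Icc a t, g s ≤ c) → g t < c) {t : ℝ} (ht : a ≤ t) : g t < c := by
  by_contra! hct
  set S := Ici a ∩ g ⁻¹' Ici c
  have hbdd : BddBelow S := ⟨a, fun s hs => hs.1⟩
  obtain ⟨ht₀, hct₀⟩ : sInf S ∈ S :=
    (hg.preimage_isClosed_of_isClosed isClosed_Ici isClosed_Ici).csInf_mem ⟨t, ht, hct⟩ hbdd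
  have hpos : a < sInf S := ht₀.lt_of_ne fun h => (h ▸ hct₀).not_gt ha
  have hbefore : ∀ s ∈ Ico a (sInf S), g s < c := fun s hs =>
    lt_of_not_ge fun hcs => hs.2.not_ge (csInf_le hbdd ⟨hs.1, hcs⟩)
  have hclosure : g (sInf S) ∈ closure (g '' Ico a (sInf S)) :=
    (hg _ ht₀).mono Ico_subset_Ici_self |>.mem_closure_image (by
      rw [closure_Ico hpos.ne]; exact right_mem_Icc.2 ht₀)
  have hle : g (sInf S) ≤ c :=
    closure_minimal (t := Iic c) (image_subset_iff.2 fun s hs => (hbefore s hs).le) isClosed_Iic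
      hclosure
  refine (hstep _ hpos fun s hs => ?_).not_ge hct₀
  rcases hs.2.lt_or_eq with hs' | rfl
  exacts [(hbefore s ⟨hs.1, hs'⟩).le, hle]

theorem le_mul_exp_of_hasDerivAt_le {φ φ' : ℝ → ℝ} {κ a b : ℝ} (hab : a ≤ b)
    (hφ : ∀ t ∈ Icc a b, HasDerivAt φ (φ' t) t) (h : ∀ t ∈ Icc a b, φ' t ≤ -κ * φ t) :
    φ b ≤ φ a * exp (-κ * (b - a)) := by
  have := le_gronwallBound_of_liminf_deriv_right_le (K := -κ) (ε := 0)
    (fun t ht => (hφ t ht).continuousAt.continuousWithinAt)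
    (fun t ht r hr => (hφ t (Ico_subset_Icc_self ht)).hasDerivWithinAt.liminf_right_slope_le hr)
    le_rfl (fun t ht => (add_zero (-κ * φ t)).symm ▸ h t (Ico_subset_Icc_self ht)) b ⟨hab, le_rfl⟩
  rwa [gronwallBound_ε0] at this

theorem mul_sq_lt_of_lt_mul_sqrt {a b ρ s : ℝ} (ha : 0 ≤ a) (hb : 0 < b) (hs : 0 ≤ s)
    (h : s < ρ * √(a / b)) : b * s ^ 2 < a * ρ ^ 2 :=
  calc b * s ^ 2 < b * (ρ * √(a / b)) ^ 2 := by gcongr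
    _ = a * ρ ^ 2 := by rw [mul_pow, sq_sqrt (by positivity)]; field_simp

variable {E : Type*} [NormedAddCommGroup E] [NormedSpace ℝ E]

structure IsExpLyapunovOn (f : E → E) (V : E → ℝ) (x₀ : E) (r a b κ : ℝ) : Prop where
  differentiableAt : ∀ x ∈ closedBall x₀ r, DifferentiableAt ℝ V x
  lower : ∀ x ∈ closedBall x₀ r, a * ‖x - x₀‖ ^ 2 ≤ V x
  upper : ∀ x ∈ closedBall x₀ r, V x ≤ b * ‖x - x₀‖ ^ 2
  fderiv_le : ∀ x ∈ closedBall x₀ r, fderiv ℝ V x (f x) ≤ -κ * V x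

namespace IsExpLyapunovOn

variable {f : E → E} {V : E → ℝ} {x₀ : E} {r a b κ : ℝ} {χ : ℝ → E}

theorem mono (hV : IsExpLyapunovOn f V x₀ r a b κ) {r' : ℝ} (hr' : r' ≤ r) :
    IsExpLyapunovOn f V x₀ r' a b κ :=
  have hsub := closedBall_subset_closedBall hr'
  ⟨fun x hx => hV.1 x (hsub hx), fun x hx => hV.2 x (hsub hx), fun x hx => hV.3 x (hsub hx),
    fun x hx => hV.4 x (hsub hx)⟩

theorem apply_le_mul_exp (hV : IsExpLyapunovOn f V x₀ r a b κ)
    (hχ : ∀ t, 0 ≤ t → HasDerivAt χ (f (χ t)) t) {T : ℝ} (hT : 0 ≤ T)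
    (hball : ∀ t ∈ Icc 0 T, χ t ∈ closedBall x₀ r) :
    V (χ T) ≤ V (χ 0) * exp (-κ * T) := by
  simpa using le_mul_exp_of_hasDerivAt_le hT
    (fun t ht => (hV.differentiableAt _ (hball t ht)).hasFDerivAt.comp_hasDerivAt t (hχ t ht.1))
    (fun t ht => hV.fderiv_le _ (hball t ht))

variable (hV : IsExpLyapunovOn f V x₀ r a b κ) (hr : 0 ≤ r) (ha : 0 < a) (hab : a ≤ b)
  (hχ : ∀ t, 0 ≤ t → HasDerivAt χ (f (χ t)) t) (h0 : b * ‖χ 0 - x₀‖ ^ 2 < a * r ^ 2)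
include hV hr ha hab hχ h0

theorem norm_lt (hκ : 0 ≤ κ) {t : ℝ} (ht : 0 ≤ t) : ‖χ t - x₀‖ < r := by
  have hlt : ∀ x : E, a * ‖x - x₀‖ ^ 2 < a * r ^ 2 → ‖x - x₀‖ < r := fun x h =>
    lt_of_pow_lt_pow_left₀ 2 hr (lt_of_mul_lt_mul_left h ha.le)
  refine ContinuousOn.forall_lt_of_forall_Icc_le (g := fun s => ‖χ s - x₀‖)
    (fun s hs => ((hχ s hs).continuousAt.sub continuousAt_const).norm.continuousWithinAt)
    (hlt _ ((mul_le_mul_of_nonneg_right hab (sq_nonneg _)).trans_lt h0))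
    (fun T hT hball => hlt _ ?_) ht
  have hball' : ∀ s ∈ Icc 0 T, χ s ∈ closedBall x₀ r := fun s hs =>
    mem_closedBall_iff_norm.2 (hball s hs)
  have hV0 : 0 ≤ V (χ 0) :=
    (mul_nonneg ha.le (sq_nonneg _)).trans (hV.lower _ (hball' 0 ⟨le_rfl, hT.le⟩))
  calc a * ‖χ T - x₀‖ ^ 2 ≤ V (χ T) := hV.lower _ (hball' T ⟨hT.le, le_rfl⟩)
    _ ≤ V (χ 0) * exp (-κ * T) := hV.apply_le_mul_exp hχ hT.le hball'
    _ ≤ V (χ 0) := mul_le_of_le_one_right hV0 (exp_le_one_iff.2 (by nlinarith))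
    _ ≤ b * ‖χ 0 - x₀‖ ^ 2 := hV.upper _ (hball' 0 ⟨le_rfl, hT.le⟩)
    _ < a * r ^ 2 := h0

theorem sq_norm_le (hκ : 0 ≤ κ) {t : ℝ} (ht : 0 ≤ t) :
    a * ‖χ t - x₀‖ ^ 2 ≤ b * ‖χ 0 - x₀‖ ^ 2 * exp (-κ * t) := by
  have hball : ∀ s ∈ Icc 0 t, χ s ∈ closedBall x₀ r := fun s hs =>
    mem_closedBall_iff_norm.2 (hV.norm_lt hr ha hab hχ h0 hκ hs.1).le
  calc a * ‖χ t - x₀‖ ^ 2 ≤ V (χ t) := hV.lower _ (hball t ⟨ht, le_rfl⟩)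
    _ ≤ V (χ 0) * exp (-κ * t) := hV.apply_le_mul_exp hχ ht hball
    _ ≤ b * ‖χ 0 - x₀‖ ^ 2 * exp (-κ * t) := by gcongr; exact hV.upper _ (hball 0 ⟨le_rfl, ht⟩)

theorem tendsto (hκ : 0 < κ) : Tendsto χ atTop (𝓝 x₀) := by
  rw [tendsto_iff_norm_sub_tendsto_zero]
  have hbound : Tendsto (fun t => √(b * ‖χ 0 - x₀‖ ^ 2 * exp (-κ * t) / a)) atTop (𝓝 0) := by
    simpa [Function.comp_def] using (((tendsto_exp_neg_atTop_nhds_zero.comp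
      (tendsto_id.const_mul_atTop hκ)).const_mul (b * ‖χ 0 - x₀‖ ^ 2)).div_const a).sqrt
  refine squeeze_zero' (Eventually.of_forall fun _ => norm_nonneg _) ?_ hbound
  filter_upwards [eventually_ge_atTop 0] with t ht
  exact le_sqrt_of_sq_le ((le_div_iff₀' ha).2 (hV.sq_norm_le hr ha hab hχ h0 hκ.le ht))

omit hr hχ h0

theorem stable (hr : 0 < r) (hκ : 0 ≤ κ) :
    ∀ ε > 0, ∃ δ > 0, ∀ χ : ℝ → E, (∀ t, 0 ≤ t → HasDerivAt χ (f (χ t)) t) →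
      ‖χ 0 - x₀‖ < δ → ∀ t, 0 ≤ t → ‖χ t - x₀‖ < ε := by
  intro ε hε
  have hρ : 0 < min r ε := lt_min hr hε
  refine ⟨min r ε * √(a / b), by have := ha.trans_le hab; positivity, fun χ hχ h0 t ht => ?_⟩
  have h0' := mul_sq_lt_of_lt_mul_sqrt ha.le (ha.trans_le hab) (norm_nonneg _) h0
  exact ((hV.mono (min_le_left r ε)).norm_lt hρ.le ha hab hχ h0' hκ ht).trans_le
    (min_le_right r ε)

theorem exists_tendsto (hr : 0 < r) (hκ : 0 < κ) :
    ∃ δ > 0, ∀ χ : ℝ → E, (∀ t, 0 ≤ t → HasDerivAt χ (f (χ t)) t) →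
      ‖χ 0 - x₀‖ < δ → Tendsto χ atTop (𝓝 x₀) :=
  ⟨r * √(a / b), by have := ha.trans_le hab; positivity, fun _ hχ h0 =>
    hV.tendsto hr.le ha hab hχ (mul_sq_lt_of_lt_mul_sqrt ha.le (ha.trans_le hab) (norm_nonneg _) h0)
      hκ⟩

end IsExpLyapunovOn

namespace BoostConverter

noncomputable section

variable (d2 y α : ℝ)

def control (z : ℝ) : ℝ := 1 / y * (z / y) ^ α

def field (x : ℝ × ℝ) : ℝ × ℝ := (1 - x.2 * control y α x.2, -d2 * x.2 + x.1 * control y α x.2)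

def potential (z : ℝ) : ℝ := y ^ 2 * (((z / y) ^ 2 - 1) / 2 - ((z / y) ^ (1 - α) - 1) / (1 - α))

def potentialDeriv (z : ℝ) : ℝ := y * (z / y - (z / y) ^ (-α))

def drift (z : ℝ) : ℝ := d2 * y * ((z / y) ^ α - z / y)

def lyapunov (c : ℝ) (x : ℝ × ℝ) : ℝ :=
  (x.1 - d2 * y ^ 2) ^ 2 / 2 + potential y α x.2 - c * (x.1 - d2 * y ^ 2) * (x.2 - y)

end

variable {d2 y α z : ℝ}

theorem hasDerivAt_potential (hy : 0 < y) (hz : 0 < z) (hα : α ≠ 1) :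
    HasDerivAt (potential y α) (potentialDeriv y α z) z := by
  have hw : HasDerivAt (fun z => (z / y) ^ (1 - α)) (y⁻¹ * (1 - α) * (z / y) ^ (-α)) z := by
    simpa using ((hasDerivAt_id z).div_const y).rpow_const (p := 1 - α) (Or.inl (by positivity))
  have hsq : HasDerivAt (fun z => (z / y) ^ 2) (2 * (z / y) * y⁻¹) z := by
    simpa using ((hasDerivAt_id z).div_const y).fun_pow 2
  refine ((((hsq.sub_const 1).div_const 2).sub ((hw.sub_const 1).div_const (1 - α))).const_mul
    (y ^ 2)).congr_deriv ?_
  rw [potentialDeriv]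
  field_simp [sub_ne_zero.2 hα.symm]

theorem one_sub_mul_control (hy : 0 < y) (hz : 0 < z) :
    1 - z * control y α z = -(potentialDeriv y α z * control y α z) := by
  have hw : 0 < z / y := by positivity
  have : (z / y) ^ (-α) * (z / y) ^ α = 1 := by rw [← rpow_add hw]; simp
  rw [control, potentialDeriv]
  field_simp
  linear_combination (-y) * this

theorem field_eq (hy : 0 < y) (x : ℝ × ℝ) (hx : 0 < x.2) :
    field d2 y α x = (-(potentialDeriv y α x.2 * control y α x.2),
      (x.1 - d2 * y ^ 2) * control y α x.2 + drift d2 y α x.2) := by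
  rw [field, one_sub_mul_control hy hx, drift, control]
  congr 1
  field_simp
  ring

theorem sq_le_potentialDeriv_mul (hy : 0 < y) (hz : 0 < z) (hα0 : 0 ≤ α) (hα1 : α ≤ 1) :
    (z - y) ^ 2 ≤ potentialDeriv y α z * (z - y) := by
  have hw : 0 < z / y := by positivity
  have hsign : 0 ≤ ((z / y) ^ α - 1) * (z / y - 1) := by
    rcases mem_uIcc.1 (rpow_mem_uIcc_one hw hα0 hα1) with h | h <;> nlinarith
  have htpos : 0 < (z / y) ^ α := rpow_pos_of_pos hw α
  have hD : z - y = y * (z / y - 1) := by field_simp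
  rw [potentialDeriv, hD, rpow_neg hw.le]
  generalize z / y = w at *
  have : (w - 1) * (w - 1) ≤ (w - (w ^ α)⁻¹) * (w - 1) := by
    have : (w - (w ^ α)⁻¹) * (w - 1) - (w - 1) * (w - 1) = (w ^ α - 1) * (w - 1) / w ^ α := by
      field_simp; ring
    linarith [div_nonneg hsign htpos.le]
  nlinarith [mul_le_mul_of_nonneg_left this (sq_nonneg y)]

section Strip

variable (hy : 0 < y) (hz : |z - y| ≤ y / 2)
include hy hz

theorem abs_div_sub_one_le : |z / y - 1| ≤ 1 / 2 := by
  rwa [div_sub_one hy.ne', abs_div, abs_of_pos hy, div_le_iff₀ hy, one_div_mul_eq_div]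

theorem div_pos_of_abs_sub_le : 0 < z / y := by
  linarith [abs_le.1 (abs_div_sub_one_le hy hz)]

variable (hα0 : 0 ≤ α) (hα1 : α ≤ 1)
include hα0 hα1

theorem rpow_div_mem_Icc : (z / y) ^ α ∈ Icc (1 / 2) (3 / 2) := by
  have := (abs_rpow_sub_one_le (div_pos_of_abs_sub_le hy hz) hα0 hα1).trans
    (abs_div_sub_one_le hy hz)
  constructor <;> linarith [abs_le.1 this]

theorem control_mem_Icc : control y α z ∈ Icc (1 / (2 * y)) (2 / y) := by
  obtain ⟨h1, h2⟩ := rpow_div_mem_Icc hy hz hα0 hα1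
  rw [control]
  constructor
  · rw [one_div_mul_eq_div, div_le_div_iff₀ (by positivity) hy]; nlinarith
  · rw [one_div_mul_eq_div]; gcongr; linarith

theorem abs_potentialDeriv_sub_le : |potentialDeriv y α z - (z - y)| ≤ 2 * |z - y| := by
  have hw := div_pos_of_abs_sub_le hy hz
  have ht := (rpow_div_mem_Icc hy hz hα0 hα1).1
  have habs := abs_rpow_sub_one_le hw hα0 hα1
  have hD : z - y = y * (z / y - 1) := by field_simp
  rw [potentialDeriv, hD, rpow_neg hw.le]
  generalize z / y = w at *
  have htpos : 0 < w ^ α := by linarith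
  have : y * (w - (w ^ α)⁻¹) - y * (w - 1) = y * ((w ^ α - 1) / w ^ α) := by field_simp; ring
  have hquot : |w ^ α - 1| / w ^ α ≤ 2 * |w - 1| := by
    rw [div_le_iff₀ htpos]; nlinarith [abs_nonneg (w ^ α - 1)]
  rw [this, abs_mul, abs_mul, abs_of_pos hy, abs_div, abs_of_pos htpos]
  nlinarith [mul_le_mul_of_nonneg_left hquot hy.le]

theorem potentialDeriv_mul_le : potentialDeriv y α z * (z - y) ≤ 3 * (z - y) ^ 2 := by
  have h := abs_potentialDeriv_sub_le hy hz hα0 hα1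
  have : (potentialDeriv y α z - (z - y)) * (z - y) ≤ 2 * (z - y) ^ 2 := by
    calc _ ≤ |potentialDeriv y α z - (z - y)| * |z - y| := by rw [← abs_mul]; exact le_abs_self _
      _ ≤ 2 * |z - y| * |z - y| := by gcongr
      _ = 2 * (z - y) ^ 2 := by rw [mul_assoc, abs_mul_abs_self, sq]
  nlinarith

theorem drift_mul_le (hd2 : 0 ≤ d2) :
    drift d2 y α z * (z - y) ≤ -(d2 * (1 - α) / 2) * (z - y) ^ 2 := by
  have hw := div_pos_of_abs_sub_le hy hz
  have hmin : 1 / 2 ≤ min (z / y) 1 := le_min (by linarith [abs_le.1 (abs_div_sub_one_le hy hz)])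
    (by norm_num)
  have key := one_sub_mul_min_mul_sq_le_sub_rpow_mul hw hα0 hα1
  have hD : z - y = y * (z / y - 1) := by field_simp
  rw [drift, hD]
  generalize z / y = w at *
  have : (1 - α) / 2 * (w - 1) ^ 2 ≤ (w - w ^ α) * (w - 1) :=
    le_trans (by nlinarith [mul_le_mul_of_nonneg_left hmin (sub_nonneg.2 hα1)]) key
  nlinarith [mul_le_mul_of_nonneg_left this (mul_nonneg hd2 (sq_nonneg y))]

theorem abs_drift_le (hd2 : 0 ≤ d2) : |drift d2 y α z| ≤ d2 * |z - y| := by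
  have hw := div_pos_of_abs_sub_le hy hz
  have habs := abs_sub_right_of_mem_uIcc (rpow_mem_uIcc_one hw hα0 hα1)
  have hD : z - y = y * (z / y - 1) := by field_simp
  rw [drift, hD, abs_mul, abs_mul, abs_mul, abs_of_nonneg hd2, abs_of_pos hy, abs_sub_comm,
    mul_assoc]
  gcongr

end Strip

theorem potential_mem_Icc (hy : 0 < y) (hz : |z - y| ≤ y / 2) (hα0 : 0 ≤ α) (hα1 : α < 1) :
    potential y α z ∈ Icc ((z - y) ^ 2 / 2) (3 * (z - y) ^ 2 / 2) := by
  have hstrip : ∀ x ∈ closedBall y (y / 2), |x - y| ≤ y / 2 := fun x hx => hx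
  have hball : z ∈ closedBall y (y / 2) := hz
  have hy_mem : y ∈ closedBall y (y / 2) := mem_closedBall_self (by positivity)
  have hpos : ∀ x ∈ closedBall y (y / 2), 0 < x := fun x hx =>
    (mul_pos hy (div_pos_of_abs_sub_le hy (hstrip x hx))).trans_eq (by field_simp)
  have hderiv : ∀ x ∈ closedBall y (y / 2),
      HasDerivAt (potential y α) (potentialDeriv y α x) x := fun x hx =>
    hasDerivAt_potential hy (hpos x hx) hα1.ne
  have hy0 : potential y α y = 0 := by simp [potential, div_self hy.ne']
  have hsq : ∀ x, HasDerivAt (fun x => (x - y) ^ 2 / 2) (x - y) x := fun x => by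
    simpa using (((hasDerivAt_id x).sub_const y).fun_pow 2).div_const 2
  constructor
  · have := le_of_hasDerivAt_of_mul_sub_nonneg (F := fun x => potential y α x - (x - y) ^ 2 / 2)
      (convex_closedBall y (y / 2)) hy_mem hball (fun x hx => (hderiv x hx).sub (hsq x))
      (fun x hx => by nlinarith [sq_le_potentialDeriv_mul hy (hpos x hx) hα0 hα1.le])
    simp only [hy0, sub_self] at this
    linarith
  · have := le_of_hasDerivAt_of_mul_sub_nonneg
      (F := fun x => 3 * ((x - y) ^ 2 / 2) - potential y α x)
      (convex_closedBall y (y / 2)) hy_mem hball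
      (fun x hx => ((hsq x).const_mul 3).sub (hderiv x hx))
      (fun x hx => by nlinarith [potentialDeriv_mul_le hy (hstrip x hx) hα0 hα1.le])
    simp only [hy0, sub_self] at this
    linarith

theorem hasFDerivAt_lyapunov (hy : 0 < y) (hα : α ≠ 1) (c : ℝ) {x : ℝ × ℝ} (hx : 0 < x.2) :
    HasFDerivAt (lyapunov d2 y α c)
      ((x.1 - d2 * y ^ 2 - c * (x.2 - y)) • ContinuousLinearMap.fst ℝ ℝ ℝ +
        (potentialDeriv y α x.2 - c * (x.1 - d2 * y ^ 2)) • ContinuousLinearMap.snd ℝ ℝ ℝ) x := by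
  have he : HasFDerivAt (fun x : ℝ × ℝ => x.1 - d2 * y ^ 2) (ContinuousLinearMap.fst ℝ ℝ ℝ) x :=
    hasFDerivAt_fst.sub_const _
  have hD : HasFDerivAt (fun x : ℝ × ℝ => x.2 - y) (ContinuousLinearMap.snd ℝ ℝ ℝ) x :=
    hasFDerivAt_snd.sub_const _
  have hG := (hasDerivAt_potential hy hx hα).comp_hasFDerivAt x
    (hasFDerivAt_snd (𝕜 := ℝ) (E := ℝ) (F := ℝ))
  have H := (((he.pow 2).mul_const (1 / 2 : ℝ)).add hG).sub ((he.const_mul c).mul hD)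
  refine (H.congr_of_eventuallyEq (Filter.Eventually.of_forall fun x => ?_)).congr_fderiv ?_
  · simp only [lyapunov, Pi.add_apply, Pi.sub_apply, Pi.mul_apply, Function.comp_apply]; ring
  · ext <;> simp [mul_comm]

theorem lyapunov_mem_Icc (hy : 0 < y) (hα0 : 0 ≤ α) (hα1 : α < 1) {c : ℝ} (hc0 : 0 ≤ c)
    (hc1 : c ≤ 1 / 2) {x : ℝ × ℝ} (hx : |x.2 - y| ≤ y / 2) :
    lyapunov d2 y α c x ∈ Icc (((x.1 - d2 * y ^ 2) ^ 2 + (x.2 - y) ^ 2) / 4)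
      (2 * ((x.1 - d2 * y ^ 2) ^ 2 + (x.2 - y) ^ 2)) := by
  obtain ⟨hG1, hG2⟩ := potential_mem_Icc hy hx hα0 hα1
  have hcross : |c * (x.1 - d2 * y ^ 2) * (x.2 - y)| ≤
      c * (((x.1 - d2 * y ^ 2) ^ 2 + (x.2 - y) ^ 2) / 2) := by
    rw [mul_assoc, abs_mul, abs_of_nonneg hc0, abs_mul]
    gcongr
    nlinarith [sq_nonneg (|x.1 - d2 * y ^ 2| - |x.2 - y|), sq_abs (x.1 - d2 * y ^ 2),
      sq_abs (x.2 - y)]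
  have := abs_le.1 hcross
  rw [lyapunov]
  constructor <;> nlinarith [sq_nonneg (x.1 - d2 * y ^ 2), sq_nonneg (x.2 - y)]

-- The Lie derivative of `lyapunov` along `field`, in the variables `e = x₁ - d₂y²`, `D = x₂ - y`,
-- `g = potentialDeriv`, `h = drift` and `u = control`.
theorem lieDeriv_le_of_bounds {d2 y α c e D g h u : ℝ} (hy : 0 < y) (hc0 : 0 ≤ c)
    (hc : c * (6 + (d2 * y) ^ 2) ≤ d2 * (1 - α) * y / 4)
    (hg : D ^ 2 ≤ g * D) (hg' : |g - D| ≤ 2 * |D|)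
    (hh : h * D ≤ -(d2 * (1 - α) / 2) * D ^ 2) (hh' : |h| ≤ d2 * |D|)
    (hu : u ∈ Icc (1 / (2 * y)) (2 / y)) :
    (e - c * D) * -(g * u) + (g - c * e) * (e * u + h) ≤ -(c / (4 * y)) * (e ^ 2 + D ^ 2) := by
  obtain ⟨hu1, hu2⟩ := hu
  have hyu1 : 1 ≤ 2 * y * u := by rwa [div_le_iff₀' (by positivity)] at hu1
  have hyu2 : y * u ≤ 2 := by rwa [le_div_iff₀' hy] at hu2
  have hk : 0 ≤ d2 * (1 - α) := by nlinarith [sq_nonneg (d2 * y)]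
  have hgD : g * D ≤ 3 * D ^ 2 := by
    have := (le_abs_self _).trans ((abs_mul (g - D) D).trans_le
      (mul_le_mul_of_nonneg_right hg' (abs_nonneg D)))
    nlinarith [abs_mul_abs_self D]
  have hgh : g * h ≤ -(d2 * (1 - α) / 2) * D ^ 2 := by
    rcases eq_or_ne D 0 with rfl | hD
    · have : g = 0 := by simpa using hg'
      simp [this]
    · have hD2 : 0 < D ^ 2 := by positivity
      refine le_of_mul_le_mul_right ?_ hD2
      nlinarith [mul_le_mul_of_nonpos_right hg (hh.trans (by nlinarith) : h * D ≤ 0)]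
  have heh : -(e * h) * y ≤ e ^ 2 / 4 + (d2 * y) ^ 2 * D ^ 2 := by
    have : |e * h| * y ≤ |e| * (d2 * |D|) * y := by rw [abs_mul]; gcongr
    nlinarith [neg_le_abs (e * h), sq_nonneg (|e| / 2 - d2 * y * |D|), sq_abs e, sq_abs D]
  have hscaled : ((e - c * D) * -(g * u) + (g - c * e) * (e * u + h)) * y ≤
      -(c / 4) * (e ^ 2 + D ^ 2) := by
    have hexp : ((e - c * D) * -(g * u) + (g - c * e) * (e * u + h)) * y =
        g * h * y + c * (y * u) * (g * D) - c * (y * u) * e ^ 2 + c * (-(e * h) * y) := by ring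
    have h1 : c * (y * u) * (g * D) ≤ c * 2 * (3 * D ^ 2) :=
      mul_le_mul (mul_le_mul_of_nonneg_left hyu2 hc0) hgD (by nlinarith) (by positivity)
    have h2 : c * (1 / 2) * e ^ 2 ≤ c * (y * u) * e ^ 2 := by gcongr; linarith
    rw [hexp]
    nlinarith [mul_le_mul_of_nonneg_right hgh hy.le, mul_le_mul_of_nonneg_left heh hc0,
      mul_le_mul_of_nonneg_right hc (sq_nonneg D),
      mul_nonneg (mul_nonneg hc0 (sq_nonneg (d2 * y))) (sq_nonneg D)]
  have hrhs : -(c / (4 * y)) * (e ^ 2 + D ^ 2) = -(c / 4) * (e ^ 2 + D ^ 2) / y := by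
    field_simp
  rwa [hrhs, le_div_iff₀ hy]

theorem field_equilibrium (hy : 0 < y) : field d2 y α (d2 * y ^ 2, y) = 0 := by
  rw [field, control, div_self hy.ne', one_rpow, mul_one, Prod.mk_eq_zero]
  constructor <;> field_simp <;> ring

theorem isExpLyapunovOn_lyapunov (hd2 : 0 ≤ d2) (hy : 0 < y) (hα0 : 0 ≤ α) (hα1 : α < 1) {c : ℝ}
    (hc0 : 0 ≤ c) (hc : c * (6 + (d2 * y) ^ 2) ≤ d2 * (1 - α) * y / 4) :
    IsExpLyapunovOn (field d2 y α) (lyapunov d2 y α c) (d2 * y ^ 2, y) (y / 2) (1 / 4) 4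
      (c / (8 * y)) := by
  have hc1 : c ≤ 1 / 2 := by
    nlinarith [sq_nonneg (d2 * y - 1 / 4), mul_nonneg (mul_nonneg hd2 hy.le) hα0]
  have hstrip : ∀ x ∈ closedBall (d2 * y ^ 2, y) (y / 2), |x.2 - y| ≤ y / 2 := fun x hx =>
    (norm_snd_le (x - (d2 * y ^ 2, y))).trans (mem_closedBall_iff_norm.1 hx)
  have hpos : ∀ x ∈ closedBall (d2 * y ^ 2, y) (y / 2), 0 < x.2 := fun x hx => by
    linarith [abs_le.1 (hstrip x hx)]
  have hnorm (x : ℝ × ℝ) := Prod.sq_norm_le_sq_add_sq (x - (d2 * y ^ 2, y))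
  have hnorm' (x : ℝ × ℝ) := Prod.sq_add_sq_le_two_mul_sq_norm (x - (d2 * y ^ 2, y))
  refine ⟨fun x hx => (hasFDerivAt_lyapunov hy hα1.ne c (hpos x hx)).differentiableAt,
    fun x hx => ?_, fun x hx => ?_, fun x hx => ?_⟩
  · have := (lyapunov_mem_Icc (d2 := d2) hy hα0 hα1 hc0 hc1 (hstrip x hx)).1
    simp only [Prod.fst_sub, Prod.snd_sub] at hnorm
    linarith [hnorm x]
  · have := (lyapunov_mem_Icc (d2 := d2) hy hα0 hα1 hc0 hc1 (hstrip x hx)).2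
    simp only [Prod.fst_sub, Prod.snd_sub] at hnorm'
    linarith [hnorm' x]
  · have hupper := (lyapunov_mem_Icc (d2 := d2) hy hα0 hα1 hc0 hc1 (hstrip x hx)).2
    have hz := hstrip x hx
    have hlie := lieDeriv_le_of_bounds (e := x.1 - d2 * y ^ 2) hy hc0 hc
      (sq_le_potentialDeriv_mul hy (hpos x hx) hα0 hα1.le)
      (abs_potentialDeriv_sub_le hy hz hα0 hα1.le) (drift_mul_le hy hz hα0 hα1.le hd2)
      (abs_drift_le hy hz hα0 hα1.le hd2) (control_mem_Icc hy hz hα0 hα1.le)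
    rw [(hasFDerivAt_lyapunov hy hα1.ne c (hpos x hx)).fderiv, field_eq hy x (hpos x hx)]
    simp only [add_apply, smul_apply, ContinuousLinearMap.coe_fst', ContinuousLinearMap.coe_snd',
      smul_eq_mul]
    refine hlie.trans ?_
    have : 0 ≤ c / (8 * y) := by positivity
    have h8 : c / (4 * y) = 2 * (c / (8 * y)) := by ring
    rw [h8]
    nlinarith

end BoostConverter

/-- asymptotic stability of the desired equilibrium for the IDA-PBC
u = (1/y⋆)·(x2/y⋆)^α, α ∈ (0,1), on the half-plane x2 > 0, with d1 = 0. -/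
theorem boost_ida_pbc_rodriguez_stable
    (d2 ystar α : ℝ) (hd2 : 0 < d2) (hy : 0 < ystar)
    (hα : α ∈ Set.Ioo (0 : ℝ) 1)
    (u : ℝ → ℝ)
    (hu : ∀ x2 : ℝ, u x2 = (1 / ystar) * (x2 / ystar) ^ α)
    (f : ℝ × ℝ → ℝ × ℝ)
    (hf : ∀ x : ℝ × ℝ, f x = (1 - x.2 * u x.2, -d2 * x.2 + x.1 * u x.2))
    (xstar : ℝ × ℝ) (hxstar : xstar = (d2 * ystar ^ 2, ystar)) :
    f xstar = 0 ∧
    (∀ ε > (0 : ℝ), ∃ δ > (0 : ℝ), ∀ χ : ℝ → ℝ × ℝ,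
      (∀ τ : ℝ, 0 ≤ τ → HasDerivAt χ (f (χ τ)) τ ∧ 0 < (χ τ).2) →
      ‖χ 0 - xstar‖ < δ → ∀ τ : ℝ, 0 ≤ τ → ‖χ τ - xstar‖ < ε) ∧
    (∃ δ > (0 : ℝ), ∀ χ : ℝ → ℝ × ℝ,
      (∀ τ : ℝ, 0 ≤ τ → HasDerivAt χ (f (χ τ)) τ ∧ 0 < (χ τ).2) →
      ‖χ 0 - xstar‖ < δ →
      Filter.Tendsto χ Filter.atTop (nhds xstar)) := by
  obtain ⟨hα0, hα1⟩ := hα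
  obtain rfl : u = BoostConverter.control ystar α := funext hu
  obtain rfl : f = BoostConverter.field d2 ystar α := funext hf
  subst hxstar
  set c := d2 * (1 - α) * ystar / (4 * (6 + (d2 * ystar) ^ 2))
  have hc0 : 0 < c := by have := sub_pos.2 hα1; positivity
  have hc : c * (6 + (d2 * ystar) ^ 2) ≤ d2 * (1 - α) * ystar / 4 := by
    rw [div_mul_eq_mul_div, mul_div_mul_right _ _ (by positivity)]
  have hV := BoostConverter.isExpLyapunovOn_lyapunov hd2.le hy hα0.le hα1 hc0.le hc
  refine ⟨BoostConverter.field_equilibrium hy, fun ε hε => ?_, ?_⟩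
  · obtain ⟨δ, hδ, H⟩ := hV.stable (by norm_num) (by norm_num) (by positivity) (by positivity) ε hε
    exact ⟨δ, hδ, fun χ hχ => H χ fun τ hτ => (hχ τ hτ).1⟩
  · obtain ⟨δ, hδ, H⟩ :=
      hV.exists_tendsto (by norm_num) (by norm_num) (by positivity) (by positivity)
    exact ⟨δ, hδ, fun χ hχ => H χ fun τ hτ => (hχ τ hτ).1⟩
end

section
/- Let d2 > 0, y⋆ > 0, k > 3 and set d1 = 0. Consider the closed-loop system on ℝ² given by dx1/dτ = 1 - x2·u(x2), dx2/dτ = -d2·x2 + x1·u(x2), with the static nonlinear voltage feedback u(x2) = k·x2/(x2² + (k - 1)·y⋆²). Then the point x⋆ := (d2·y⋆², y⋆) is an asymptotically stable equilibrium: it is an equilibrium, it is Lyapunov stable (for every ε > 0 there is δ > 0 such that every solution starting within distance δ of x⋆ stays within distance ε for all forward time), and there is a neighborhood of x⋆ from which every solution converges to x⋆ as τ → ∞. -/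
/-!
With `z₁ = x₁ - d₂y⋆²` and `z₂ = x₂ - y⋆`, the IDA-PBC closed-loop energy
`z₁²/2 + (k-1)/k · logBarrier y⋆ x₂` decreases along the closed loop at rate
`(k-1)/k · d₂ (x₂+y⋆)² z₂² / (x₂² + (k-1)y⋆²)`: the `z₁ z₂` terms cancel, so the dissipation
only sees `z₂`. Adding a small cross term `-ε z₁ z₂` makes the dissipation strict near `x⋆`:
on the slab `|z₂| ≤ y⋆/2` the resulting function `V = boostLyap` is comparable to `z₁² + z₂²`
and satisfies `V̇ ≤ -κ V`. A strict quadratic Lyapunov function of this kind gives local exponential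
convergence, hence stability and attractivity, by the usual first-exit-time argument.
-/

open Real Set Filter Topology Metric

theorem antitoneOn_mul_exp_of_hasDerivAt_le {D : Set ℝ} (hD : Convex ℝ D) {g g' : ℝ → ℝ} {κ : ℝ}
    (hg : ∀ t ∈ D, HasDerivAt g (g' t) t) (hle : ∀ t ∈ D, g' t ≤ -κ * g t) :
    AntitoneOn (fun t => g t * exp (κ * t)) D := by
  have hderiv : ∀ t ∈ D, HasDerivAt (fun t => g t * exp (κ * t))
      (exp (κ * t) * (g' t + κ * g t)) t := fun t ht =>
    ((hg t ht).mul ((hasDerivAt_id t).const_mul κ).exp).congr_deriv (by simp only [id]; ring)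
  refine antitoneOn_of_hasDerivWithinAt_nonpos hD
    (fun t ht => (hderiv t ht).continuousAt.continuousWithinAt)
    (fun t ht => (hderiv t (interior_subset ht)).hasDerivWithinAt) fun t ht => ?_
  have := hle t (interior_subset ht)
  exact mul_nonpos_of_nonneg_of_nonpos (exp_pos _).le (by linarith)

theorem Continuous.forall_lt_of_barrier {g : ℝ → ℝ} (hg : Continuous g) {a ρ : ℝ} (ha : g a < ρ)
    (hbarrier : ∀ T, a ≤ T → (∀ s ∈ Icc a T, g s ≤ ρ) → g T < ρ) : ∀ t, a ≤ t → g t < ρ := by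
  intro t ht
  by_contra! hρt
  set S := Icc a t ∩ {s | ρ ≤ g s}
  have hS : IsClosed S := isClosed_Icc.inter (isClosed_le continuous_const hg)
  have hbdd : BddBelow S := ⟨a, fun s hs => hs.1.1⟩
  have hT : sInf S ∈ S := hS.csInf_mem ⟨t, ⟨ht, le_rfl⟩, hρt⟩ hbdd
  set T := sInf S
  have hfirst : ∀ s ∈ Icc a T, ρ ≤ g s → s = T := fun s hs hρs =>
    le_antisymm hs.2 (csInf_le hbdd ⟨⟨hs.1, hs.2.trans hT.1.2⟩, hρs⟩)
  obtain ⟨c, hc, hgc⟩ := intermediate_value_Icc hT.1.1 hg.continuousOn ⟨ha.le, hT.2⟩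
  have hgT : g T = ρ := hfirst c hc hgc.ge ▸ hgc
  refine (hbarrier T hT.1.1 fun s hs => ?_).ne hgT
  by_contra! hlt
  exact hlt.ne' (hfirst s hs hlt.le ▸ hgT)

theorem tendsto_of_sq_norm_sub_le_exp {E : Type*} [SeminormedAddCommGroup E] {χ : ℝ → E} {x₀ : E}
    {a C κ : ℝ} (ha : 0 < a) (hκ : 0 < κ)
    (hχ : ∀ t, 0 ≤ t → a * ‖χ t - x₀‖ ^ 2 ≤ C * exp (-(κ * t))) :
    Tendsto χ atTop (𝓝 x₀) := by
  have hexp : Tendsto (fun t => C / a * exp (-(κ * t))) atTop (𝓝 0) := by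
    simpa using ((tendsto_exp_atBot.comp
      (tendsto_neg_atTop_atBot.comp (tendsto_id.const_mul_atTop hκ))).const_mul (C / a))
  have hsq : Tendsto (fun t => ‖χ t - x₀‖ ^ 2) atTop (𝓝 0) := by
    refine squeeze_zero' (Eventually.of_forall fun t => by positivity) ?_ hexp
    filter_upwards [eventually_ge_atTop 0] with t ht
    rw [div_mul_eq_mul_div, le_div_iff₀ ha, mul_comm]
    exact hχ t ht
  rw [tendsto_iff_norm_sub_tendsto_zero]
  simpa [sqrt_sq (norm_nonneg _)] using hsq.sqrt

section Lyapunov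

variable {E : Type*} [NormedAddCommGroup E] [NormedSpace ℝ E]

def IsLyapunovStable (f : E → E) (x₀ : E) : Prop :=
  ∀ ε > (0 : ℝ), ∃ δ > (0 : ℝ), ∀ χ : ℝ → E, (∀ t, HasDerivAt χ (f (χ t)) t) →
    ‖χ 0 - x₀‖ < δ → ∀ t, 0 ≤ t → ‖χ t - x₀‖ < ε

def IsLocallyAttractive (f : E → E) (x₀ : E) : Prop :=
  ∃ δ > (0 : ℝ), ∀ χ : ℝ → E, (∀ t, HasDerivAt χ (f (χ t)) t) →
    ‖χ 0 - x₀‖ < δ → Tendsto χ atTop (𝓝 x₀)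

variable {f : E → E} {V : E → ℝ} {V' : E → E →L[ℝ] ℝ} {x₀ : E} {χ : ℝ → E} {ρ a b κ : ℝ}

theorem lyapunov_mul_exp_le (hV : ∀ x ∈ closedBall x₀ ρ, HasFDerivAt V (V' x) x)
    (hdecay : ∀ x ∈ closedBall x₀ ρ, V' x (f x) ≤ -κ * V x)
    (hχ : ∀ t, HasDerivAt χ (f (χ t)) t) {T : ℝ} (hT : 0 ≤ T)
    (hball : ∀ s ∈ Icc 0 T, χ s ∈ closedBall x₀ ρ) :
    V (χ T) * exp (κ * T) ≤ V (χ 0) := by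
  have hanti := antitoneOn_mul_exp_of_hasDerivAt_le (convex_Icc 0 T) (g := V ∘ χ)
    (fun s hs => (hV _ (hball s hs)).comp_hasDerivAt s (hχ s)) (fun s hs => hdecay _ (hball s hs))
  simpa using hanti ⟨le_rfl, hT⟩ ⟨hT, le_rfl⟩ hT

theorem lyapunov_exp_decay (hV : ∀ x ∈ closedBall x₀ ρ, HasFDerivAt V (V' x) x)
    (hdecay : ∀ x ∈ closedBall x₀ ρ, V' x (f x) ≤ -κ * V x)
    (hlow : ∀ x ∈ closedBall x₀ ρ, a * ‖x - x₀‖ ^ 2 ≤ V x) (ha : 0 ≤ a) (hκ : 0 ≤ κ)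
    (hχ : ∀ t, HasDerivAt χ (f (χ t)) t) (h0 : ‖χ 0 - x₀‖ < ρ) (hV0 : V (χ 0) < a * ρ ^ 2)
    {t : ℝ} (ht : 0 ≤ t) :
    ‖χ t - x₀‖ < ρ ∧ a * ‖χ t - x₀‖ ^ 2 ≤ V (χ 0) * exp (-(κ * t)) := by
  have hcont : Continuous fun s => ‖χ s - x₀‖ :=
    ((continuous_iff_continuousAt.2 fun s => (hχ s).continuousAt).sub continuous_const).norm
  have hdecay_at : ∀ T, 0 ≤ T → (∀ s ∈ Icc 0 T, ‖χ s - x₀‖ ≤ ρ) →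
      a * ‖χ T - x₀‖ ^ 2 ≤ V (χ 0) * exp (-(κ * T)) := fun T hT hle => by
    have hball : ∀ s ∈ Icc 0 T, χ s ∈ closedBall x₀ ρ := fun s hs =>
      mem_closedBall_iff_norm.2 (hle s hs)
    have hmono := lyapunov_mul_exp_le hV hdecay hχ hT hball
    rw [exp_neg, ← div_eq_mul_inv, le_div_iff₀ (exp_pos _)]
    exact (mul_le_mul_of_nonneg_right (hlow _ (hball T ⟨hT, le_rfl⟩)) (exp_pos _).le).trans hmono
  have hV0_nonneg : 0 ≤ V (χ 0) :=
    (mul_nonneg ha (sq_nonneg _)).trans (hlow _ (mem_closedBall_iff_norm.2 h0.le))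
  -- leaving the ball would need `V ≥ a ρ ^ 2` at the exit time, but `V` only decreases
  have hinv := hcont.forall_lt_of_barrier h0 fun T hT hle => by
    by_contra! hρ
    have hexp : exp (-(κ * T)) ≤ 1 := exp_le_one_iff.2 (by nlinarith)
    have hexit : a * ρ ^ 2 ≤ a * ‖χ T - x₀‖ ^ 2 :=
      mul_le_mul_of_nonneg_left (pow_le_pow_left₀ ((norm_nonneg _).trans h0.le) hρ 2) ha
    linarith [hdecay_at T hT hle, mul_le_of_le_one_right hV0_nonneg hexp]
  exact ⟨hinv t ht, hdecay_at t ht fun s hs => (hinv s hs.1).le⟩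

theorem isLyapunovStable_and_isLocallyAttractive_of_lyapunov
    (hV : ∀ x ∈ closedBall x₀ ρ, HasFDerivAt V (V' x) x)
    (hdecay : ∀ x ∈ closedBall x₀ ρ, V' x (f x) ≤ -κ * V x)
    (hlow : ∀ x ∈ closedBall x₀ ρ, a * ‖x - x₀‖ ^ 2 ≤ V x)
    (hup : ∀ x ∈ closedBall x₀ ρ, V x ≤ b * ‖x - x₀‖ ^ 2)
    (hρ : 0 < ρ) (ha : 0 < a) (hb : 0 < b) (hκ : 0 < κ) :
    IsLyapunovStable f x₀ ∧ IsLocallyAttractive f x₀ := by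
  have hm : 0 < min 1 (a / b) := lt_min one_pos (div_pos ha hb)
  have hdecay_r : ∀ r, 0 < r → r ≤ ρ → ∀ χ : ℝ → E, (∀ t, HasDerivAt χ (f (χ t)) t) →
      ‖χ 0 - x₀‖ < r * min 1 (a / b) → ∀ t, 0 ≤ t →
        ‖χ t - x₀‖ < r ∧ a * ‖χ t - x₀‖ ^ 2 ≤ V (χ 0) * exp (-(κ * t)) := by
    intro r hr hrρ χ hχ h0 t ht
    have hsub := closedBall_subset_closedBall (x := x₀) hrρ
    have h0r : ‖χ 0 - x₀‖ < r := h0.trans_le (mul_le_of_le_one_right hr.le (min_le_left _ _))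
    have hm_sq : min 1 (a / b) ^ 2 ≤ a / b :=
      (pow_le_of_le_one hm.le (min_le_left _ _) two_ne_zero).trans (min_le_right _ _)
    have hV0 : V (χ 0) < a * r ^ 2 := calc
      V (χ 0) ≤ b * ‖χ 0 - x₀‖ ^ 2 := hup _ (hsub (mem_closedBall_iff_norm.2 h0r.le))
      _ < b * (r * min 1 (a / b)) ^ 2 := by gcongr
      _ ≤ b * (r ^ 2 * (a / b)) := by rw [mul_pow]; gcongr
      _ = a * r ^ 2 := by field_simp
    exact lyapunov_exp_decay (fun x hx => hV x (hsub hx)) (fun x hx => hdecay x (hsub hx))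
      (fun x hx => hlow x (hsub hx)) ha.le hκ.le hχ h0r hV0 ht
  refine ⟨fun ε hε => ⟨min ε ρ * min 1 (a / b), by positivity, fun χ hχ h0 t ht => ?_⟩,
    ⟨ρ * min 1 (a / b), by positivity, fun χ hχ h0 => ?_⟩⟩
  · exact (hdecay_r _ (lt_min hε hρ) (min_le_right _ _) χ hχ h0 t ht).1.trans_le (min_le_left _ _)
  · exact tendsto_of_sq_norm_sub_le_exp ha hκ fun t ht => (hdecay_r ρ hρ le_rfl χ hχ h0 t ht).2

end Lyapunov

theorem Prod.sq_norm_le_sq_fst_add_sq_snd (p : ℝ × ℝ) : ‖p‖ ^ 2 ≤ p.1 ^ 2 + p.2 ^ 2 := by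
  rw [Prod.norm_def, Real.norm_eq_abs, Real.norm_eq_abs]
  rcases le_total |p.1| |p.2| with h | h
  · rw [max_eq_right h, sq_abs]; nlinarith [sq_nonneg p.1]
  · rw [max_eq_left h, sq_abs]; nlinarith [sq_nonneg p.2]

theorem Prod.sq_fst_add_sq_snd_le_two_mul_sq_norm (p : ℝ × ℝ) :
    p.1 ^ 2 + p.2 ^ 2 ≤ 2 * ‖p‖ ^ 2 := by
  have h₁ := pow_le_pow_left₀ (norm_nonneg _) (norm_fst_le p) 2
  have h₂ := pow_le_pow_left₀ (norm_nonneg _) (norm_snd_le p) 2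
  rw [Real.norm_eq_abs, sq_abs] at h₁ h₂
  linarith

noncomputable def zhangFeedback (k y s : ℝ) : ℝ := k * s / (s ^ 2 + (k - 1) * y ^ 2)

def boostField (d2 : ℝ) (u : ℝ → ℝ) (x : ℝ × ℝ) : ℝ × ℝ :=
  (1 - x.2 * u x.2, -d2 * x.2 + x.1 * u x.2)

/-- The Bregman divergence at `y` of `s ↦ s²/2 - y² log s`, which is minimal at `s = y`. -/
noncomputable def logBarrier (y s : ℝ) : ℝ :=
  s ^ 2 / 2 - y ^ 2 * log s - (y ^ 2 / 2 - y ^ 2 * log y)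

noncomputable def boostLyap (d2 y k ε : ℝ) (x : ℝ × ℝ) : ℝ :=
  (x.1 - d2 * y ^ 2) ^ 2 / 2 + (k - 1) / k * logBarrier y x.2 - ε * (x.1 - d2 * y ^ 2) * (x.2 - y)

noncomputable def boostLyapDeriv (d2 y k ε : ℝ) (x : ℝ × ℝ) : ℝ × ℝ →L[ℝ] ℝ :=
  (x.1 - d2 * y ^ 2 - ε * (x.2 - y)) • ContinuousLinearMap.fst ℝ ℝ ℝ +
    ((k - 1) / k * (x.2 - y ^ 2 / x.2) - ε * (x.1 - d2 * y ^ 2)) • ContinuousLinearMap.snd ℝ ℝ ℝ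

section Boost

variable {d2 y k ε : ℝ} {x : ℝ × ℝ}

theorem boostField_zhangFeedback_eq_zero (hy : y ≠ 0) (hk : k ≠ 0) :
    boostField d2 (zhangFeedback k y) (d2 * y ^ 2, y) = 0 := by
  have hu : zhangFeedback k y y = y⁻¹ := by
    rw [zhangFeedback, show y ^ 2 + (k - 1) * y ^ 2 = k * y ^ 2 by ring]; field_simp
  ext <;> simp only [boostField, hu, Prod.fst_zero, Prod.snd_zero] <;> field_simp <;> ring

theorem sq_sub_div_two_le_logBarrier {s : ℝ} (hy : 0 < y) (hs : 0 < s) :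
    (s - y) ^ 2 / 2 ≤ logBarrier y s := by
  have hlog : log (s / y) ≤ s / y - 1 := log_le_sub_one_of_pos (div_pos hs hy)
  rw [log_div hs.ne' hy.ne'] at hlog
  have e : y ^ 2 * (s / y - 1) = y * s - y ^ 2 := by field_simp
  have := mul_le_mul_of_nonneg_left hlog (sq_nonneg y)
  unfold logBarrier; nlinarith

theorem logBarrier_le {s : ℝ} (hy : 0 < y) (hs : y / 2 ≤ s) :
    logBarrier y s ≤ 5 / 2 * (s - y) ^ 2 := by
  have hs0 : 0 < s := by linarith
  have hlog : log (y / s) ≤ y / s - 1 := log_le_sub_one_of_pos (div_pos hy hs0)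
  rw [log_div hy.ne' hs0.ne'] at hlog
  have hbound : logBarrier y s ≤ (s - y) ^ 2 * (s + 2 * y) / (2 * s) := by
    have := mul_le_mul_of_nonneg_left hlog (sq_nonneg y)
    have e : (s - y) ^ 2 * (s + 2 * y) / (2 * s) = s ^ 2 / 2 - y ^ 2 / 2 + y ^ 2 * (y / s - 1) := by
      field_simp; ring
    rw [e]; unfold logBarrier; linarith
  calc logBarrier y s ≤ (s - y) ^ 2 * (s + 2 * y) / (2 * s) := hbound
    _ ≤ 5 / 2 * (s - y) ^ 2 := by
      rw [div_le_iff₀ (by positivity)]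
      nlinarith [sq_nonneg (s - y)]

theorem hasFDerivAt_boostLyap (hx : x.2 ≠ 0) :
    HasFDerivAt (boostLyap d2 y k ε) (boostLyapDeriv d2 y k ε x) x := by
  have h1 : HasFDerivAt (fun x : ℝ × ℝ => x.1 - d2 * y ^ 2) (ContinuousLinearMap.fst ℝ ℝ ℝ) x :=
    hasFDerivAt_fst.sub_const _
  have h2 : HasFDerivAt (fun x : ℝ × ℝ => x.2) (ContinuousLinearMap.snd ℝ ℝ ℝ) x := hasFDerivAt_snd
  have hB : HasFDerivAt (fun x : ℝ × ℝ => logBarrier y x.2)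
      ((x.2 - y ^ 2 / x.2) • ContinuousLinearMap.snd ℝ ℝ ℝ) x :=
    ((((h2.pow 2).mul_const 2⁻¹).sub ((h2.log hx).const_mul (y ^ 2))).sub_const
      (y ^ 2 / 2 - y ^ 2 * log y)).congr_fderiv (ContinuousLinearMap.ext fun v => by
        simp only [Nat.add_one_sub_one, pow_one, nsmul_eq_mul, Nat.cast_ofNat, sub_apply,
          smul_apply, ContinuousLinearMap.coe_snd', smul_eq_mul]
        field_simp)
  exact ((((h1.pow 2).mul_const 2⁻¹).add (hB.const_mul ((k - 1) / k))).sub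
    ((h1.const_mul ε).mul (h2.sub_const y))).congr_fderiv (ContinuousLinearMap.ext fun v => by
      simp only [boostLyapDeriv, Nat.add_one_sub_one, pow_one, nsmul_eq_mul, Nat.cast_ofNat,
        sub_apply, add_apply, smul_apply, ContinuousLinearMap.coe_fst',
        ContinuousLinearMap.coe_snd', smul_eq_mul]
      ring)

theorem boostLyapDeriv_apply_boostField (hx : x.2 ≠ 0) (hk : k ≠ 0)
    (hD : x.2 ^ 2 + (k - 1) * y ^ 2 ≠ 0) :
    boostLyapDeriv d2 y k ε x (boostField d2 (zhangFeedback k y) x) =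
      (-(k - 1) * d2 * (x.2 + y) ^ 2 * (x.2 - y) ^ 2 - ε * k ^ 2 * x.2 * (x.1 - d2 * y ^ 2) ^ 2
        + ε * k * (k - 1) * (x.2 + y) * (x.2 - y) ^ 2
        + ε * k * d2 * x.2 * (x.2 + y) * (x.1 - d2 * y ^ 2) * (x.2 - y))
        / (k * (x.2 ^ 2 + (k - 1) * y ^ 2)) := by
  simp only [boostLyapDeriv, boostField, zhangFeedback, add_apply, smul_apply,
    ContinuousLinearMap.coe_fst', ContinuousLinearMap.coe_snd', smul_eq_mul]
  generalize hDdef : x.2 ^ 2 + (k - 1) * y ^ 2 = D at hD ⊢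
  field_simp
  subst hDdef
  ring

theorem boostLyapDeriv_numerator_le {s z : ℝ} (hy : 0 < y) (hk : 1 < k) (hε : 0 < ε)
    (hεd : ε * (5 / 2 * k * (k - 1) + 225 / 16 * d2 ^ 2 * y ^ 2 + k ^ 2 / 4)
      ≤ 9 / 4 * (k - 1) * d2 * y)
    (hs : |s - y| ≤ y / 2) :
    -(k - 1) * d2 * (s + y) ^ 2 * (s - y) ^ 2 - ε * k ^ 2 * s * z ^ 2
        + ε * k * (k - 1) * (s + y) * (s - y) ^ 2 + ε * k * d2 * s * (s + y) * z * (s - y)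
      ≤ -(ε * k ^ 2 * y / 4) * (z ^ 2 + (s - y) ^ 2) := by
  obtain ⟨hs₁, hs₂⟩ := abs_le.1 hs
  have hk1 : 0 < k - 1 := sub_pos.2 hk
  have hd2 : 0 < d2 := by
    have : 0 < ε * (5 / 2 * k * (k - 1) + 225 / 16 * d2 ^ 2 * y ^ 2 + k ^ 2 / 4) :=
      mul_pos hε (by nlinarith [sq_nonneg (d2 * y)])
    nlinarith [mul_pos hk1 hy]
  have hP : 0 ≤ s * (s + y) := by nlinarith
  have hP' : s * (s + y) ≤ 15 / 4 * y ^ 2 := by nlinarith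
  have hz2 : 0 ≤ (s - y) ^ 2 := sq_nonneg _
  have h₁ : 9 / 4 * y ^ 2 * ((k - 1) * d2 * (s - y) ^ 2)
      ≤ (s + y) ^ 2 * ((k - 1) * d2 * (s - y) ^ 2) :=
    mul_le_mul_of_nonneg_right (by nlinarith) (mul_nonneg (mul_pos hk1 hd2).le hz2)
  have h₂ : y / 2 * (ε * k ^ 2 * z ^ 2) ≤ s * (ε * k ^ 2 * z ^ 2) :=
    mul_le_mul_of_nonneg_right (by linarith) (by positivity)
  have h₃ : (s + y) * (ε * k * (k - 1) * (s - y) ^ 2)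
      ≤ 5 / 2 * y * (ε * k * (k - 1) * (s - y) ^ 2) :=
    mul_le_mul_of_nonneg_right (by linarith)
      (mul_nonneg (mul_pos (mul_pos hε (by linarith : (0:ℝ) < k)) hk1).le hz2)
  -- Young's inequality for the cross term, weighted so that it costs half the `z ^ 2` dissipation
  have h₄ : k * d2 * (s * (s + y)) * z * (s - y)
      ≤ k ^ 2 * y / 4 * z ^ 2 + 225 / 16 * d2 ^ 2 * y ^ 3 * (s - y) ^ 2 := by
    have hyoung : y * (k * d2 * (s * (s + y)) * z * (s - y))
        ≤ (k * y) ^ 2 / 4 * z ^ 2 + d2 ^ 2 * (s * (s + y)) ^ 2 * (s - y) ^ 2 := by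
      nlinarith [sq_nonneg (k * y * z / 2 - d2 * (s * (s + y)) * (s - y))]
    have hP2 : (s * (s + y)) ^ 2 ≤ (15 / 4 * y ^ 2) ^ 2 := pow_le_pow_left₀ hP hP' 2
    have := mul_le_mul_of_nonneg_left hP2 (mul_nonneg (sq_nonneg d2) hz2)
    refine le_of_mul_le_mul_left ?_ hy
    nlinarith
  have h₅ := mul_le_mul_of_nonneg_left h₄ hε.le
  have h₆ := mul_le_mul_of_nonneg_right hεd hz2
  nlinarith

theorem sq_norm_div_eight_le_boostLyap (hy : 0 < y) (hk : 3 ≤ k) (hε₀ : 0 ≤ ε) (hε : ε ≤ 1 / 4)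
    (hx : 0 < x.2) :
    1 / 8 * ‖x - (d2 * y ^ 2, y)‖ ^ 2 ≤ boostLyap d2 y k ε x := by
  have hnorm := Prod.sq_norm_le_sq_fst_add_sq_snd (x - (d2 * y ^ 2, y))
  simp only [Prod.fst_sub, Prod.snd_sub] at hnorm
  have hc : 2 / 3 ≤ (k - 1) / k := by rw [le_div_iff₀ (by linarith)]; linarith
  have hB := sq_sub_div_two_le_logBarrier hy hx
  have := mul_le_mul hc hB (by positivity) (by linarith)
  unfold boostLyap
  nlinarith [mul_nonneg hε₀ (sq_nonneg (x.1 - d2 * y ^ 2 - (x.2 - y))),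
    mul_nonneg (sub_nonneg.2 hε) (sq_nonneg (x.1 - d2 * y ^ 2)),
    mul_nonneg (sub_nonneg.2 hε) (sq_nonneg (x.2 - y))]

theorem boostLyap_le (hy : 0 < y) (hk : 1 ≤ k) (hε₀ : 0 ≤ ε) (hε : ε ≤ 1 / 4)
    (hx : y / 2 ≤ x.2) :
    boostLyap d2 y k ε x ≤ 3 * ((x.1 - d2 * y ^ 2) ^ 2 + (x.2 - y) ^ 2) := by
  have hc : (k - 1) / k ≤ 1 := by rw [div_le_one (by linarith)]; linarith
  have hB₀ : 0 ≤ logBarrier y x.2 := (by positivity : (0 : ℝ) ≤ (x.2 - y) ^ 2 / 2).trans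
    (sq_sub_div_two_le_logBarrier hy (by linarith))
  have hB := logBarrier_le hy hx
  have := mul_le_of_le_one_left hB₀ hc
  unfold boostLyap
  nlinarith [mul_nonneg hε₀ (sq_nonneg (x.1 - d2 * y ^ 2 + (x.2 - y))),
    mul_nonneg (sub_nonneg.2 hε) (sq_nonneg (x.1 - d2 * y ^ 2)),
    mul_nonneg (sub_nonneg.2 hε) (sq_nonneg (x.2 - y))]

theorem boostLyap_le_six_mul_sq_norm (hy : 0 < y) (hk : 1 ≤ k) (hε₀ : 0 ≤ ε) (hε : ε ≤ 1 / 4)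
    (hx : y / 2 ≤ x.2) :
    boostLyap d2 y k ε x ≤ 6 * ‖x - (d2 * y ^ 2, y)‖ ^ 2 := by
  have hnorm := Prod.sq_fst_add_sq_snd_le_two_mul_sq_norm (x - (d2 * y ^ 2, y))
  simp only [Prod.fst_sub, Prod.snd_sub] at hnorm
  linarith [boostLyap_le (d2 := d2) (ε := ε) hy hk hε₀ hε hx]

theorem boostLyapDeriv_apply_boostField_le (hy : 0 < y) (hk : 3 ≤ k)
    (hε : 0 < ε) (hε4 : ε ≤ 1 / 4)
    (hεd : ε * (5 / 2 * k * (k - 1) + 225 / 16 * d2 ^ 2 * y ^ 2 + k ^ 2 / 4)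
      ≤ 9 / 4 * (k - 1) * d2 * y)
    (hx : |x.2 - y| ≤ y / 2) :
    boostLyapDeriv d2 y k ε x (boostField d2 (zhangFeedback k y) x)
      ≤ -(ε / (24 * y)) * boostLyap d2 y k ε x := by
  obtain ⟨hx₁, hx₂⟩ := abs_le.1 hx
  have hkpos : 0 < k := by linarith
  have hD : 0 < k * (x.2 ^ 2 + (k - 1) * y ^ 2) := by
    have : 0 < (k - 1) * y ^ 2 := by have := sub_pos.2 (show 1 < k by linarith); positivity
    positivity
  have hDle : k * (x.2 ^ 2 + (k - 1) * y ^ 2) ≤ 2 * k ^ 2 * y ^ 2 := by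
    have : x.2 ^ 2 ≤ (k + 1) * y ^ 2 := by nlinarith
    nlinarith
  have hN := boostLyapDeriv_numerator_le (z := x.1 - d2 * y ^ 2) hy (by linarith : (1 : ℝ) < k)
    hε hεd hx
  have hV := boostLyap_le (d2 := d2) (ε := ε) hy (by linarith : (1:ℝ) ≤ k) hε.le hε4
    (by linarith : y / 2 ≤ x.2)
  set q := (x.1 - d2 * y ^ 2) ^ 2 + (x.2 - y) ^ 2
  have hq : 0 ≤ q := by positivity
  rw [boostLyapDeriv_apply_boostField (by linarith) hkpos.ne' (by nlinarith)]
  calc _ ≤ -(ε * k ^ 2 * y / 4 * q) / (k * (x.2 ^ 2 + (k - 1) * y ^ 2)) := by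
        gcongr; linarith
    _ ≤ -(ε * k ^ 2 * y / 4 * q) / (2 * k ^ 2 * y ^ 2) := by
        rw [neg_div, neg_div, neg_le_neg_iff]
        exact div_le_div_of_nonneg_left (by positivity) hD hDle
    _ = -(ε / (24 * y)) * (3 * q) := by field_simp; ring
    _ ≤ -(ε / (24 * y)) * boostLyap d2 y k ε x :=
        mul_le_mul_of_nonpos_left hV (neg_nonpos.2 (by positivity))

theorem exists_boost_crossWeight (hd2 : 0 < d2) (hy : 0 < y) (hk : 1 < k) :
    ∃ ε, 0 < ε ∧ ε ≤ 1 / 4 ∧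
      ε * (5 / 2 * k * (k - 1) + 225 / 16 * d2 ^ 2 * y ^ 2 + k ^ 2 / 4)
        ≤ 9 / 4 * (k - 1) * d2 * y := by
  have hA : 0 ≤ 5 / 2 * k * (k - 1) + 225 / 16 * d2 ^ 2 * y ^ 2 + k ^ 2 / 4 := by
    have := sub_pos.2 hk; positivity
  obtain ⟨c, hc, hcA⟩ := exists_pos_mul_lt (by have := sub_pos.2 hk; positivity :
    0 < 9 / 4 * (k - 1) * d2 * y) (5 / 2 * k * (k - 1) + 225 / 16 * d2 ^ 2 * y ^ 2 + k ^ 2 / 4)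
  refine ⟨min (1 / 4) c, lt_min (by norm_num) hc, min_le_left _ _, ?_⟩
  rw [mul_comm] at hcA
  exact (mul_le_mul_of_nonneg_right (min_le_right _ _) hA).trans hcA.le

end Boost

/-- asymptotic stability of the desired equilibrium for the IDA-PBC
u = k·x2/(x2² + (k-1)·y⋆²), k > 3, with d1 = 0. -/
theorem boost_ida_pbc_zhang_stable
    (d2 ystar k : ℝ) (hd2 : 0 < d2) (hy : 0 < ystar) (hk : 3 < k)
    (u : ℝ → ℝ)
    (hu : ∀ x2 : ℝ, u x2 = k * x2 / (x2 ^ 2 + (k - 1) * ystar ^ 2))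
    (f : ℝ × ℝ → ℝ × ℝ)
    (hf : ∀ x : ℝ × ℝ, f x = (1 - x.2 * u x.2, -d2 * x.2 + x.1 * u x.2))
    (xstar : ℝ × ℝ) (hxstar : xstar = (d2 * ystar ^ 2, ystar)) :
    f xstar = 0 ∧
    (∀ ε > (0 : ℝ), ∃ δ > (0 : ℝ), ∀ χ : ℝ → ℝ × ℝ,
      (∀ τ : ℝ, HasDerivAt χ (f (χ τ)) τ) →
      ‖χ 0 - xstar‖ < δ → ∀ τ : ℝ, 0 ≤ τ → ‖χ τ - xstar‖ < ε) ∧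
    (∃ δ > (0 : ℝ), ∀ χ : ℝ → ℝ × ℝ,
      (∀ τ : ℝ, HasDerivAt χ (f (χ τ)) τ) →
      ‖χ 0 - xstar‖ < δ →
      Filter.Tendsto χ Filter.atTop (nhds xstar)) := by
  obtain rfl : u = zhangFeedback k ystar := funext hu
  obtain rfl : f = boostField d2 (zhangFeedback k ystar) := funext hf
  subst hxstar
  obtain ⟨ε, hε, hε4, hεd⟩ := exists_boost_crossWeight hd2 hy (by linarith : (1 : ℝ) < k)
  have hstrip : ∀ x ∈ closedBall (d2 * ystar ^ 2, ystar) (ystar / 2), |x.2 - ystar| ≤ ystar / 2 :=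
    fun x hx => (norm_snd_le _).trans (mem_closedBall_iff_norm.1 hx)
  have hslab : ∀ x ∈ closedBall (d2 * ystar ^ 2, ystar) (ystar / 2), ystar / 2 ≤ x.2 :=
    fun x hx => by linarith [abs_le.1 (hstrip x hx)]
  exact ⟨boostField_zhangFeedback_eq_zero hy.ne' (by positivity),
    isLyapunovStable_and_isLocallyAttractive_of_lyapunov
      (fun x hx => hasFDerivAt_boostLyap (by linarith [hslab x hx]))
      (fun x hx => boostLyapDeriv_apply_boostField_le hy hk.le hε hε4 hεd (hstrip x hx))
      (fun x hx => sq_norm_div_eight_le_boostLyap hy hk.le hε.le hε4 (by linarith [hslab x hx]))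
      (fun x hx => boostLyap_le_six_mul_sq_norm hy (by linarith) hε.le hε4 (hslab x hx))
      (half_pos hy) (by norm_num) (by norm_num) (by positivity)⟩
end
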